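/- arXiv:2503.21390 — 5 statements merged into one kernel-verified Lean document; each statement's English description precedes it below -/
import Mathlib

section
/- Let (V,1,𝒮,Y) be a vertex F-algebra over a formal group law F over a commutative ring R. Then for all a,b ∈ V one has i_{z,w} Y(a,F(z,w))(𝒮(w)b) = 𝒮(w)(Y(a,z)b) in V((z))⟦w⟧, where the left-hand side is Σ_{n≥0} (i_{z,w} Y(a,F(z,w))𝒮^{(n)}(b))·w^n, with i_{z,w} Y(a,F(z,w))c denoting the substitution v ↦ F(z,w) applied to Y(a,v)c ∈ V((v)). -/
/-!
Coefficient-wise formal calculus for vertex `F`-algebras, following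
M. Upmeier, "Vertex F-Algebras and Their Associated Lie Algebra".

Series in one, two or three variables are represented by their coefficient
functions `ℤ → R`, `ℤ → ℤ → R`, …; products are given by coefficient-wise
(finite) sums, expressed via `finsum` (`∑ᶠ`).
-/

open scoped BigOperators

noncomputable section

/-- Generalized binomial coefficient `C(n,k) = n(n-1)⋯(n-k+1)/k!` for `n : ℤ`, `k : ℕ`. -/
def zbinom (n : ℤ) (k : ℕ) : ℤ :=
  if 0 ≤ n then (n.toNat.choose k : ℤ)
  else (-1 : ℤ) ^ k * (((k : ℤ) - n - 1).toNat.choose k : ℤ)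

/-- `C(n,m)` for integer `m`, with `C(n,m) = 0` for `m < 0`. -/
def zbinomZ (n m : ℤ) : ℤ := if m < 0 then 0 else zbinom n m.toNat

/-- `(-1)^n` for `n : ℤ`. -/
def msign (n : ℤ) : ℤ := if Even n then 1 else -1

section Series

variable {R : Type*} [CommRing R] {M : Type*} [AddCommGroup M] [Module R M]

/-- Product of a one-variable series with `R`-coefficients with an `M`-valued one. -/
def mulS (f : ℤ → R) (g : ℤ → M) : ℤ → M := fun n => ∑ᶠ i : ℤ, f i • g (n - i)

/-- The constant series `1` (one variable). -/
def oneS (R : Type*) [CommRing R] : ℤ → R := fun n => if n = 0 then 1 else 0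

/-- Natural powers of a one-variable series. -/
def pow1 (f : ℤ → R) : ℕ → ℤ → R
  | 0 => oneS R
  | k + 1 => mulS f (pow1 f k)

/-- Product of two-variable series. -/
def mulS2 (f : ℤ → ℤ → R) (g : ℤ → ℤ → M) : ℤ → ℤ → M :=
  fun a b => ∑ᶠ p : ℤ × ℤ, f p.1 p.2 • g (a - p.1) (b - p.2)

/-- The constant series `1` (two variables). -/
def oneS2 (R : Type*) [CommRing R] : ℤ → ℤ → R := fun a b => if a = 0 ∧ b = 0 then 1 else 0

/-- Natural powers of a two-variable series. -/
def pow2 (f : ℤ → ℤ → R) : ℕ → ℤ → ℤ → R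
  | 0 => oneS2 R
  | k + 1 => mulS2 f (pow2 f k)

/-- `f ∈ M((z))`: only finitely many negative powers. -/
def IsLaurent (f : ℤ → M) : Prop := ∃ N : ℤ, ∀ n : ℤ, n < N → f n = 0

/-- `f ∈ M((z,w))`: only finitely many nonzero coefficients with some negative index. -/
def IsLaurent2 (f : ℤ → ℤ → M) : Prop :=
  {p : ℤ × ℤ | (p.1 < 0 ∨ p.2 < 0) ∧ f p.1 p.2 ≠ 0}.Finite

/-- Formal derivative of a one-variable series. -/
def fderiv1 (f : ℤ → R) : ℤ → R := fun n => ((n + 1 : ℤ) : R) * f (n + 1)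

/-- The polynomial `z - w` as a two-variable series. -/
def zmw (R : Type*) [CommRing R] : ℤ → ℤ → R :=
  fun i j => if i = 1 ∧ j = 0 then 1 else if i = 0 ∧ j = 1 then -1 else 0

/-- `∂/∂w` of a two-variable series. -/
def d01 (f : ℤ → ℤ → R) : ℤ → ℤ → R := fun i j => ((j + 1 : ℤ) : R) * f i (j + 1)

/-- `∂/∂z` of a two-variable series. -/
def d10 (f : ℤ → ℤ → R) : ℤ → ℤ → R := fun i j => ((i + 1 : ℤ) : R) * f (i + 1) j

/-- Substitution `p(f(z,w))` of a two-variable series (zero constant term) into a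
one-variable power series `p`. -/
def comp2 (p : ℤ → R) (f : ℤ → ℤ → R) : ℤ → ℤ → R :=
  fun a b => ∑ᶠ m : ℕ, p (m : ℤ) * pow2 f m a b

/-- Substitution `p(f(z))` of a one-variable series (zero constant term) into a
one-variable power series `p`. -/
def comp1 (p : ℤ → R) (f : ℤ → R) : ℤ → R :=
  fun a => ∑ᶠ m : ℕ, p (m : ℤ) * pow1 f m a

/-- `(G - z)/z` for `G ≡ z (mod w)`. -/
def hzS (G : ℤ → ℤ → R) : ℤ → ℤ → R := fun i j => G (i + 1) j - oneS2 R i j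

/-- Integer powers `i_{z,w} G^n`, for `G ≡ z (mod w)`, expanded in `R((z))⟦w⟧`:
the Newton expansion `z^n ∑_k C(n,k) ((G-z)/z)^k`. -/
def izwPow (G : ℤ → ℤ → R) (n : ℤ) : ℤ → ℤ → R :=
  fun a b => ∑ᶠ k : ℕ, (zbinom n k : R) * pow2 (hzS G) k (a - n) b

/-- `(G - w)/w` for `G ≡ w (mod z)`. -/
def hwS (G : ℤ → ℤ → R) : ℤ → ℤ → R := fun i j => G i (j + 1) - oneS2 R i j

/-- Integer powers `i_{w,z} G^n`, for `G ≡ w (mod z)`, expanded in `R((w))⟦z⟧`. -/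
def iwzPow (G : ℤ → ℤ → R) (n : ℤ) : ℤ → ℤ → R :=
  fun a b => ∑ᶠ k : ℕ, (zbinom n k : R) * pow2 (hwS G) k a (b - n)

/-- `(G + w)/(-w)` for `G ≡ ι(w) (mod z)`. -/
def hwNegS (G : ℤ → ℤ → R) : ℤ → ℤ → R := fun i j => -G i (j + 1) - oneS2 R i j

/-- Integer powers `i_{w,z} G^n`, for `G ≡ -w(1+⋯) (mod z)` (e.g. `G = F(z, ι w)`),
expanded in `R((w))⟦z⟧`. -/
def iwzPowNeg (G : ℤ → ℤ → R) (n : ℤ) : ℤ → ℤ → R :=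
  fun a b => (msign n : R) * ∑ᶠ k : ℕ, (zbinom n k : R) * pow2 (hwNegS G) k a (b - n)

/-- `(f + z)/(-z)` for a series `f = -z(1 + ⋯)` such as `ι(z)`. -/
def hS (f : ℤ → R) : ℤ → R := fun j => -f (j + 1) - oneS R j

/-- Integer powers `f(z)^n` (`n : ℤ`) for `f = -z(1+⋯)`, e.g. `f = ι(z)`. -/
def iotaPow (f : ℤ → R) (n : ℤ) : ℤ → R :=
  fun a => (msign n : R) * ∑ᶠ k : ℕ, (zbinom n k : R) * pow1 (hS f) k (a - n)

/-- `f - 1` for a power series with constant term `1`. -/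
def hOneS (f : ℤ → R) : ℤ → R := fun j => f j - oneS R j

/-- Multiplicative inverse of a power series with constant term `1`. -/
def invOne (f : ℤ → R) : ℤ → R :=
  fun a => ∑ᶠ k : ℕ, ((-1 : R) ^ k) * pow1 (hOneS f) k a

end Series

/-- A (one-dimensional, commutative) formal group law `F(z,w)` over `R`, together with
its (unique) inverse `ι`. -/
structure FormalGroupLaw (R : Type*) [CommRing R] where
  F : ℤ → ℤ → R
  F_supp : ∀ i j : ℤ, i < 0 ∨ j < 0 → F i j = 0
  /-- `F(z,0) = z`, so that `F(z,w) = z + w + O(zw)` using commutativity. -/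
  F_modw : ∀ i : ℤ, F i 0 = if i = 1 then 1 else 0
  F_comm : ∀ i j : ℤ, F i j = F j i
  /-- associativity `F(F(z,w),v) = F(z,F(w,v))`, coefficient-wise. -/
  F_assoc : ∀ a b c : ℤ,
    (∑ᶠ m : ℕ, F (m : ℤ) c * pow2 F m a b) = ∑ᶠ n : ℕ, F a (n : ℤ) * pow2 F n b c
  /-- the inverse `ι(z) = -z + O(z²)`. -/
  inv : ℤ → R
  inv_supp : ∀ n : ℤ, n < 1 → inv n = 0
  inv_one : inv 1 = -1
  /-- `F(z, ι(z)) = 0`, coefficient-wise. -/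
  inv_eq : ∀ n : ℤ, (∑ᶠ p : ℤ × ℕ, F p.1 (p.2 : ℤ) * pow1 inv p.2 (n - p.1)) = 0

namespace FormalGroupLaw

variable {R : Type*} [CommRing R] {M : Type*} [AddCommGroup M] [Module R M]

/-- The series `F(z, ι(w))`. -/
def Fzi (𝓕 : FormalGroupLaw R) : ℤ → ℤ → R :=
  fun i j => ∑ᶠ m : ℕ, 𝓕.F i (m : ℤ) * pow1 𝓕.inv m j

/-- The `F`-delta distribution `z⁻¹δ_F(w/z) = i_{z,w}F(z,ιw)⁻¹ - i_{w,z}F(z,ιw)⁻¹`. -/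
def delta (𝓕 : FormalGroupLaw R) : ℤ → ℤ → R :=
  fun a b => izwPow 𝓕.Fzi (-1) a b - iwzPowNeg 𝓕.Fzi (-1) a b

/-- `p_F(z) = F^{0,1}(z,0)⁻¹`, the coefficient series of the invariant 1-form. -/
def pF (𝓕 : FormalGroupLaw R) : ℤ → R := invOne (fun i => 𝓕.F i 1)

/-- `F`-residue: the coefficient of `z⁻¹` in `f(z)·p_F(z)`. -/
def resF (𝓕 : FormalGroupLaw R) (f : ℤ → M) : M := ∑ᶠ i : ℤ, 𝓕.pF i • f (-1 - i)

/-- The `F`-hyperderivative `𝒮^F_n f`, defined by `i_{z,w}f(F(z,w)) = ∑_n (𝒮^F_n f)(z) wⁿ`. -/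
def hyper (𝓕 : FormalGroupLaw R) (n : ℕ) (f : ℤ → R) : ℤ → R :=
  fun a => ∑ᶠ m : ℤ, f m * izwPow 𝓕.F m a (n : ℤ)

/-- `F`-binomial coefficients: `i_{z,w}F(z,w)^n = ∑_{i,j} binomF(n;i,j) z^i w^j`. -/
def binomF (𝓕 : FormalGroupLaw R) (n i j : ℤ) : R := izwPow 𝓕.F n i j

/-- `φ` is a logarithm of `F`: `φ(F(z,w)) = φ(z) + φ(w)`, `φ(0) = 0`, `φ'(0) = 1`. -/
def IsLogarithm (𝓕 : FormalGroupLaw R) (φ : ℤ → R) : Prop :=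
  (∀ n : ℤ, n < 0 → φ n = 0) ∧ φ 0 = 0 ∧ φ 1 = 1 ∧
  ∀ a b : ℤ, (∑ᶠ m : ℕ, φ (m : ℤ) * pow2 𝓕.F m a b)
    = (if b = 0 then φ a else 0) + (if a = 0 then φ b else 0)

end FormalGroupLaw

section Vertex

variable {R : Type*} [CommRing R] {V : Type*} [AddCommGroup V] [Module R V]

/-- For `c = ∑_m c_m v^m ∈ V((v))`, the substitution `v ↦ F(z,w)` (coefficient `(k,n)` of
`z^k w^n`, expanded in `V((z))⟦w⟧`). -/
def substF (𝓕 : FormalGroupLaw R) (c : ℤ → V) : ℤ → ℤ → V :=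
  fun k n => ∑ᶠ m : ℤ, izwPow 𝓕.F m k n • c m

/-- Coefficients of `i_{z,w} Y(a, F(z,w)) (Y(b,w)c)`, where `Ya v = Y(a,·)v` and
`d = Y(b,·)c`. -/
def substFProd (𝓕 : FormalGroupLaw R) (Ya : V → ℤ → V) (d : ℤ → V) : ℤ → ℤ → V :=
  fun k n => ∑ᶠ q : ℤ × ℤ, izwPow 𝓕.F q.1 k (n - q.2) • Ya (d q.2) q.1

end Vertex

/-- A vertex `F`-algebra `(V, 𝟙, 𝒮, Y)` over the formal group law `𝓕`.
`Y a b : ℤ → V` records the coefficients of `Y(a,z)b = ∑_k (Y a b k) z^k`, and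
`S n` is the component `𝒮⁽ⁿ⁾` of the `F`-shift operator `𝒮(z) = ∑_{n≥0} 𝒮⁽ⁿ⁾ zⁿ`. -/
structure VertexFAlgebra (R : Type*) [CommRing R] (𝓕 : FormalGroupLaw R)
    (V : Type*) [AddCommGroup V] [Module R V] where
  vac : V
  S : ℕ → V →ₗ[R] V
  Y : V →ₗ[R] V →ₗ[R] (ℤ → V)
  /-- `Y(a,z)b ∈ V((z))`. -/
  Y_laurent : ∀ a b : V, IsLaurent (Y a b)
  /-- `Y(a,z)𝟙` is holomorphic. -/
  vac_holo : ∀ (a : V) (k : ℤ), k < 0 → Y a vac k = 0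
  /-- `Y(a,z)𝟙|_{z=0} = a`. -/
  creation : ∀ a : V, Y a vac 0 = a
  /-- `Y(𝟙,z) = id`. -/
  Y_vac : ∀ (b : V) (k : ℤ), Y vac b k = if k = 0 then b else 0
  /-- `𝒮(0) = id`. -/
  S_zero : S 0 = LinearMap.id
  /-- `𝒮(z)𝟙 = 𝟙`. -/
  S_vac : ∀ n : ℕ, 1 ≤ n → S n vac = 0
  /-- `𝒮(z) ∘ 𝒮(w) = 𝒮(F(z,w))`, coefficient-wise. -/
  S_comp : ∀ (a : V) (i j : ℕ),
    S i (S j a) = ∑ᶠ m : ℕ, pow2 𝓕.F m (i : ℤ) (j : ℤ) • S m a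
  /-- `F`-translation covariance `Y(𝒮(w)a, z)b = i_{z,w} Y(a,F(z,w))b`. -/
  translation : ∀ (a b : V) (k : ℤ) (n : ℕ),
    Y (S n a) b k = substF 𝓕 (Y a b) k (n : ℤ)
  /-- weak `F`-associativity. -/
  weak_assoc : ∀ a b c : V, ∃ N : ℕ,
    mulS2 (pow2 𝓕.F N) (fun k l => Y (Y a b k) c l)
      = mulS2 (pow2 𝓕.F N) (substFProd 𝓕 (fun v => Y a v) (Y b c))
  /-- skew symmetry `Y(a,z)b = 𝒮(z)(Y(b,ι(z))a)`, coefficient-wise. -/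
  skew : ∀ (a b : V) (k : ℤ),
    Y a b k = ∑ᶠ q : ℕ × ℤ, iotaPow 𝓕.inv q.2 (k - (q.1 : ℤ)) • S q.1 (Y b a q.2)

end

section AuxLemmas

open Function

variable {R : Type*} [CommRing R] {M : Type*} [AddCommGroup M] [Module R M]

lemma pow2_supp_fst (f : ℤ → ℤ → R) (i0 : ℤ) (hf : ∀ i j : ℤ, i < i0 → f i j = 0) :
    ∀ (m : ℕ) (i j : ℤ), i < (m : ℤ) * i0 → pow2 f m i j = 0 := by
  intro m
  induction m with
  | zero =>
    intro i j hi
    simp only [Nat.cast_zero, zero_mul] at hi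
    simp only [pow2, oneS2, if_neg (fun h : i = 0 ∧ j = 0 => by omega)]
  | succ m ih =>
    intro i j hi
    have : ∀ p : ℤ × ℤ, f p.1 p.2 • pow2 f m (i - p.1) (j - p.2) = 0 := by
      intro p
      by_cases h1 : p.1 < i0
      · rw [hf _ _ h1, zero_smul]
      · rw [ih (i - p.1) (j - p.2) (by push_cast at hi ⊢; nlinarith [hi]), smul_zero]
    simp only [pow2, mulS2]
    exact finsum_eq_zero_of_forall_eq_zero this

lemma pow2_supp_snd (f : ℤ → ℤ → R) (j0 : ℤ) (hf : ∀ i j : ℤ, j < j0 → f i j = 0) :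
    ∀ (m : ℕ) (i j : ℤ), j < (m : ℤ) * j0 → pow2 f m i j = 0 := by
  intro m
  induction m with
  | zero =>
    intro i j hj
    simp only [Nat.cast_zero, zero_mul] at hj
    simp only [pow2, oneS2, if_neg (fun h : i = 0 ∧ j = 0 => by omega)]
  | succ m ih =>
    intro i j hj
    have : ∀ p : ℤ × ℤ, f p.1 p.2 • pow2 f m (i - p.1) (j - p.2) = 0 := by
      intro p
      by_cases h1 : p.2 < j0
      · rw [hf _ _ h1, zero_smul]
      · rw [ih (i - p.1) (j - p.2) (by push_cast at hj ⊢; nlinarith [hj]), smul_zero]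
    simp only [pow2, mulS2]
    exact finsum_eq_zero_of_forall_eq_zero this

end AuxLemmas

section AuxLemmas2

open Function

variable {R : Type*} [CommRing R] {V : Type*} [AddCommGroup V] [Module R V]
variable (𝓕 : FormalGroupLaw R)

lemma hzS_supp_fst (i j : ℤ) (h : i < -1) : hzS 𝓕.F i j = 0 := by
  simp only [hzS, oneS2, 𝓕.F_supp (i+1) j (Or.inl (by omega)),
    if_neg (fun hc : i = 0 ∧ j = 0 => by omega), sub_zero]

lemma hzS_supp_snd (i j : ℤ) (h : j < 1) : hzS 𝓕.F i j = 0 := by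
  rcases lt_or_eq_of_le (by omega : j ≤ 0) with hj | hj
  · simp only [hzS, oneS2, 𝓕.F_supp (i+1) j (Or.inr hj),
      if_neg (fun hc : i = 0 ∧ j = 0 => by omega), sub_zero]
  · subst hj
    simp only [hzS, oneS2, 𝓕.F_modw (i+1)]
    by_cases hi : i = 0
    · subst hi; norm_num
    · rw [if_neg (by omega), if_neg (by simp [hi]), sub_zero]

lemma izwPow_F_neg (m k t : ℤ) (ht : t < 0) : izwPow 𝓕.F m k t = 0 := by
  apply finsum_eq_zero_of_forall_eq_zero
  intro l
  rw [pow2_supp_snd (hzS 𝓕.F) 1 (hzS_supp_snd 𝓕) l _ _ (by omega), mul_zero]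

lemma izwPow_F_big (m k t : ℤ) (hkt : k + t < m) : izwPow 𝓕.F m k t = 0 := by
  apply finsum_eq_zero_of_forall_eq_zero
  intro l
  by_cases h1 : t < (l : ℤ) * 1
  · rw [pow2_supp_snd (hzS 𝓕.F) 1 (hzS_supp_snd 𝓕) l _ _ h1, mul_zero]
  · rw [pow2_supp_fst (hzS 𝓕.F) (-1) (hzS_supp_fst 𝓕) l (k - m) t (by omega), mul_zero]

lemma pow2_F_supp (m : ℕ) (i j : ℤ) (h : i < 0 ∨ j < 0) : pow2 𝓕.F m i j = 0 := by
  rcases h with h | h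
  · exact pow2_supp_fst 𝓕.F 0 (fun i j hij => 𝓕.F_supp i j (Or.inl hij)) m i j (by omega)
  · exact pow2_supp_snd 𝓕.F 0 (fun i j hij => 𝓕.F_supp i j (Or.inr hij)) m i j (by omega)

lemma pow2_F_snd_zero (m : ℕ) (i : ℤ) : pow2 𝓕.F m i 0 = if i = (m : ℤ) then 1 else 0 := by
  induction m generalizing i with
  | zero => simp [pow2, oneS2]
  | succ m ih =>
    simp only [pow2, mulS2]
    rw [finsum_eq_single _ ((1 : ℤ), (0 : ℤ))]
    · simp only []
      rw [𝓕.F_modw 1, if_pos rfl, (by norm_num : i - ((1:ℤ),(0:ℤ)).1 = i - 1), (by norm_num : (0:ℤ) - ((1:ℤ),(0:ℤ)).2 = 0), ih (i - 1)]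
      push_cast
      by_cases hi : i = (m : ℤ) + 1
      · rw [if_pos (by omega), if_pos hi]; norm_num
      · rw [if_neg (by omega), if_neg hi]; norm_num
    · rintro ⟨p1, p2⟩ hp
      rcases lt_trichotomy p2 0 with h | h | h
      · rw [𝓕.F_supp p1 p2 (Or.inr h), zero_smul]
      · subst h
        have : p1 ≠ 1 := fun hc => hp (by rw [hc])
        rw [𝓕.F_modw p1, if_neg this, zero_smul]
      · rw [pow2_F_supp 𝓕 m (i - p1) (0 - p2) (Or.inr (by omega)), smul_zero]

lemma zbinom_zero (l : ℕ) : zbinom 0 l = if l = 0 then 1 else 0 := by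
  cases l with
  | zero => simp [zbinom]
  | succ l => simp [zbinom, Nat.choose_eq_zero_of_lt (Nat.succ_pos l)]

lemma iotaPow_zero (f : ℤ → R) (a : ℤ) : iotaPow f 0 a = if a = 0 then 1 else 0 := by
  simp only [iotaPow, msign, if_pos (Even.zero)]
  rw [finsum_eq_single _ 0]
  · simp [zbinom, pow1, oneS]
  · intro l hl
    rw [zbinom_zero, if_neg hl]
    norm_num

end AuxLemmas2

section AuxLemmas3

open Function

variable {R : Type*} [CommRing R] {V : Type*} [AddCommGroup V] [Module R V]
variable {𝓕 : FormalGroupLaw R} (A : VertexFAlgebra R 𝓕 V)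

/-- `Y(c,z)𝟙 = 𝒮(z)c`. -/
lemma Y_vac_eq (c : V) (l : ℤ) :
    A.Y c A.vac l = if l < 0 then 0 else A.S l.toNat c := by
  by_cases hl : l < 0
  · rw [if_pos hl, A.vac_holo c l hl]
  · rw [if_neg hl, A.skew c A.vac l]
    push_neg at hl
    rw [finsum_eq_single _ ((l.toNat : ℕ), (0 : ℤ))]
    · have h0 : l - (l.toNat : ℤ) = 0 := by omega
      rw [iotaPow_zero, h0, if_pos rfl, A.Y_vac c 0, if_pos rfl, one_smul]
    · rintro ⟨q1, q2⟩ hq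
      by_cases h2 : q2 = 0
      · subst h2
        have : q1 ≠ l.toNat := fun hc => hq (by rw [hc])
        rw [iotaPow_zero, if_neg (by omega), zero_smul]
      · rw [A.Y_vac c q2, if_neg h2, map_zero, smul_zero]

lemma substF_neg (c : ℤ → V) (k t : ℤ) (ht : t < 0) : substF 𝓕 c k t = 0 := by
  apply finsum_eq_zero_of_forall_eq_zero
  intro m
  rw [izwPow_F_neg 𝓕 m k t ht, zero_smul]

lemma substF_laurent (c : ℤ → V) (N0 : ℤ) (hc : ∀ m : ℤ, m < N0 → c m = 0)
    (k t : ℤ) (h : k + t < N0) : substF 𝓕 c k t = 0 := by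
  apply finsum_eq_zero_of_forall_eq_zero
  intro m
  by_cases hm : m < N0
  · rw [hc m hm, smul_zero]
  · rw [izwPow_F_big 𝓕 m k t (by omega), zero_smul]

/-- uniform Laurent bound for `Y a (S j b)`, `j ≤ B`. -/
lemma unif_bound (a b : V) (B : ℕ) :
    ∃ N0 : ℤ, ∀ j : ℕ, j ≤ B → ∀ m : ℤ, m < N0 → A.Y a (A.S j b) m = 0 := by
  induction B with
  | zero =>
    obtain ⟨N, hN⟩ := A.Y_laurent a (A.S 0 b)
    exact ⟨N, fun j hj m hm => by rw [Nat.le_zero.mp hj]; exact hN m hm⟩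
  | succ B ih =>
    obtain ⟨N1, h1⟩ := ih
    obtain ⟨N2, h2⟩ := A.Y_laurent a (A.S (B + 1) b)
    refine ⟨min N1 N2, fun j hj m hm => ?_⟩
    rcases Nat.lt_succ_iff_lt_or_eq.mp (Nat.lt_succ_of_le hj) with h | h
    · exact h1 j (Nat.lt_succ_iff.mp h) m (lt_of_lt_of_le hm (min_le_left _ _))
    · rw [h]; exact h2 m (lt_of_lt_of_le hm (min_le_right _ _))

/-- the `substFProd` integrand with `c = vac` vanishes except for
`0 ≤ q.2 ≤ n`, `N0 ≤ q.1 ≤ k + n`. -/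
lemma Rr_term_zero (a b : V) (B : ℕ) (N0 : ℤ)
    (hN0 : ∀ j : ℕ, j ≤ B → ∀ m : ℤ, m < N0 → A.Y a (A.S j b) m = 0)
    (k n : ℤ) (hn : n ≤ (B : ℤ)) (q : ℤ × ℤ)
    (hq : ¬(0 ≤ q.2 ∧ q.2 ≤ n ∧ N0 ≤ q.1 ∧ q.1 ≤ k + n)) :
    izwPow 𝓕.F q.1 k (n - q.2) • A.Y a (A.Y b A.vac q.2) q.1 = 0 := by
  by_cases h2 : q.2 < 0
  · rw [Y_vac_eq A b q.2, if_pos h2, map_zero]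
    simp
  by_cases h3 : n < q.2
  · rw [izwPow_F_neg 𝓕 _ _ _ (by omega), zero_smul]
  by_cases h4 : k + n < q.1
  · rw [izwPow_F_big 𝓕 _ _ _ (by omega), zero_smul]
  -- remaining: q.1 < N0
  have h5 : q.1 < N0 := by omega
  rw [Y_vac_eq A b q.2, if_neg (by omega),
    hN0 q.2.toNat (by omega) q.1 h5, smul_zero]

/-- `substFProd` with `c = vac` vanishes for negative `w`-exponent. -/
lemma Rr_neg (a b : V) (k n : ℤ) (hn : n < 0) :
    substFProd 𝓕 (fun v => A.Y a v) (A.Y b A.vac) k n = 0 := by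
  apply finsum_eq_zero_of_forall_eq_zero
  intro q
  show izwPow 𝓕.F q.1 k (n - q.2) • A.Y a (A.Y b A.vac q.2) q.1 = 0
  by_cases h2 : q.2 < 0
  · rw [Y_vac_eq A b q.2, if_pos h2, map_zero]; simp
  · rw [izwPow_F_neg 𝓕 _ _ _ (by omega), zero_smul]

/-- `substFProd` with `c = vac` is Laurent in `z`. -/
lemma Rr_laurent (a b : V) (B : ℕ) (N0 : ℤ)
    (hN0 : ∀ j : ℕ, j ≤ B → ∀ m : ℤ, m < N0 → A.Y a (A.S j b) m = 0)
    (k n : ℤ) (hn : n ≤ (B : ℤ)) (hk : k + n < N0) :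
    substFProd 𝓕 (fun v => A.Y a v) (A.Y b A.vac) k n = 0 := by
  apply finsum_eq_zero_of_forall_eq_zero
  intro q
  exact Rr_term_zero A a b B N0 hN0 k n hn q (by omega)

end AuxLemmas3

section AuxLemmas4

open Function

variable {R : Type*} [CommRing R] {V : Type*} [AddCommGroup V] [Module R V]
variable {𝓕 : FormalGroupLaw R} (A : VertexFAlgebra R 𝓕 V)

lemma substF_eq_sum (c : ℤ → V) (k t : ℤ) (s1 : Finset ℤ)
    (h : ∀ m : ℤ, izwPow 𝓕.F m k t • c m ≠ 0 → m ∈ s1) :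
    substF 𝓕 c k t = ∑ m ∈ s1, izwPow 𝓕.F m k t • c m :=
  finsum_eq_sum_of_support_subset _ (fun m hm => Finset.mem_coe.mpr (h m hm))

/-- Step 3: the `substFProd` against the vacuum as a finite sum of `substF`'s. -/
lemma Rr_eq_sum (a b : V) (k : ℤ) (n : ℕ) :
    substFProd 𝓕 (fun v => A.Y a v) (A.Y b A.vac) k (n : ℤ)
      = ∑ j ∈ Finset.range (n + 1), substF 𝓕 (A.Y a (A.S j b)) k ((n : ℤ) - (j : ℤ)) := by
  obtain ⟨N0, hN0⟩ := unif_bound A a b n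
  have hsub : support (fun q : ℤ × ℤ =>
      izwPow 𝓕.F q.1 k ((n : ℤ) - q.2) • (fun v => A.Y a v) (A.Y b A.vac q.2) q.1)
      ⊆ ↑(Finset.Icc N0 (k + (n : ℤ)) ×ˢ Finset.Icc (0 : ℤ) (n : ℤ)) := by
    intro q hq
    rw [mem_support] at hq
    simp only [Finset.coe_product, Set.mem_prod, Finset.mem_coe, Finset.mem_Icc]
    by_contra hqs
    exact hq (Rr_term_zero A a b n N0 hN0 k n le_rfl q (by omega))
  rw [substFProd, finsum_eq_sum_of_support_subset _ hsub, Finset.sum_product, Finset.sum_comm]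
  have himg : Finset.Icc (0 : ℤ) (n : ℤ)
      = Finset.image (fun j : ℕ => (j : ℤ)) (Finset.range (n + 1)) := by
    ext x
    simp only [Finset.mem_Icc, Finset.mem_image, Finset.mem_range]
    constructor
    · intro hx; exact ⟨x.toNat, by omega, by omega⟩
    · rintro ⟨j, hj, rfl⟩; omega
  rw [himg, Finset.sum_image (by intro x _ y _ h; exact Nat.cast_injective h)]
  refine Finset.sum_congr rfl ?_
  intro j hj
  have hjn : j ≤ n := by simpa [Nat.lt_succ_iff] using hj
  have hsub2 : substF 𝓕 (A.Y a (A.S j b)) k ((n : ℤ) - (j : ℤ))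
      = ∑ m ∈ Finset.Icc N0 (k + (n : ℤ)),
          izwPow 𝓕.F m k ((n : ℤ) - (j : ℤ)) • A.Y a (A.S j b) m := by
    apply substF_eq_sum
    intro m hm
    rw [Finset.mem_Icc]
    constructor
    · by_contra hc
      exact hm (by rw [hN0 j hjn m (by omega), smul_zero])
    · by_contra hc
      exact hm (by rw [izwPow_F_big 𝓕 m k _ (by omega), zero_smul])
  rw [hsub2]
  refine Finset.sum_congr rfl ?_
  intro m _
  show izwPow 𝓕.F m k ((n : ℤ) - (j : ℤ)) • A.Y a (A.Y b A.vac (j : ℤ)) m = _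
  rw [Y_vac_eq A b (j : ℤ), if_neg (by omega), (by omega : ((j : ℤ)).toNat = j)]

/-- cancellation of `F(z,w)^N` : the two sides of weak associativity against the
vacuum agree coefficient-wise. -/
lemma cancel (a b : V) (N : ℕ)
    (hEq : mulS2 (pow2 𝓕.F N) (fun k l => A.Y (A.Y a b k) A.vac l)
      = mulS2 (pow2 𝓕.F N) (substFProd 𝓕 (fun v => A.Y a v) (A.Y b A.vac))) :
    ∀ (B : ℕ) (n : ℤ), n < (B : ℤ) → ∀ k : ℤ,
      A.Y (A.Y a b k) A.vac n = substFProd 𝓕 (fun v => A.Y a v) (A.Y b A.vac) k n := by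
  obtain ⟨NL, hNL⟩ := A.Y_laurent a b
  have hLz : ∀ k' l' : ℤ, k' < NL → A.Y (A.Y a b k') A.vac l' = 0 := by
    intro k' l' hk'
    rw [hNL k' hk', map_zero]
    rfl
  intro B
  induction B with
  | zero =>
    intro n hn k
    rw [A.vac_holo _ n (by exact_mod_cast hn), Rr_neg A a b k n (by exact_mod_cast hn)]
  | succ B ih =>
    intro n hn k
    by_cases hnB : n < (B : ℤ)
    · exact ih n hnB k
    · have hnn : n = (B : ℤ) := by push_cast at hn ⊢; omega
      have hn0 : 0 ≤ n := by omega
      obtain ⟨N0, hN0⟩ := unif_bound A a b n.toNat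
      have h1 := congrFun (congrFun hEq (k + (N : ℤ))) n
      simp only [mulS2] at h1
      set g : ℤ × ℤ → V := fun p =>
        if p = ((N : ℤ), (0 : ℤ)) then 0
        else pow2 𝓕.F N p.1 p.2 • A.Y (A.Y a b (k + (N : ℤ) - p.1)) A.vac (n - p.2) with hg
      set g' : ℤ × ℤ → V := fun p =>
        if p = ((N : ℤ), (0 : ℤ)) then 0
        else pow2 𝓕.F N p.1 p.2 •
          substFProd 𝓕 (fun v => A.Y a v) (A.Y b A.vac) (k + (N : ℤ) - p.1) (n - p.2) with hg'
      -- the two "rest" integrands agree, by the induction hypothesis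
      have hgg' : g = g' := by
        funext p
        simp only [hg, hg']
        by_cases hp : p = ((N : ℤ), (0 : ℤ))
        · rw [if_pos hp, if_pos hp]
        · rw [if_neg hp, if_neg hp]
          rcases lt_trichotomy p.2 0 with h2 | h2 | h2
          · rw [pow2_F_supp 𝓕 N p.1 p.2 (Or.inr h2), zero_smul, zero_smul]
          · have hp1 : p.1 ≠ (N : ℤ) := by
              intro hc; exact hp (Prod.ext hc h2)
            rw [h2, pow2_F_snd_zero 𝓕 N p.1, if_neg hp1, zero_smul, zero_smul]
          · rw [ih (n - p.2) (by omega) (k + (N : ℤ) - p.1)]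
      -- finiteness of the rest integrand supports
      have hgfin : (support g).Finite := by
        apply Set.Finite.subset
          ((Finset.Icc (0:ℤ) (k + (N:ℤ) - NL) ×ˢ Finset.Icc (1:ℤ) n).finite_toSet)
        intro p hp
        rw [mem_support] at hp
        simp only [Finset.coe_product, Set.mem_prod, Finset.mem_coe, Finset.mem_Icc]
        simp only [hg] at hp
        by_cases hpp : p = ((N : ℤ), (0 : ℤ))
        · exact absurd (if_pos hpp) hp
        rw [if_neg hpp] at hp
        refine ⟨⟨?_, ?_⟩, ?_, ?_⟩
        · by_contra hc
          exact hp (by rw [pow2_F_supp 𝓕 N p.1 p.2 (Or.inl (by omega)), zero_smul])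
        · by_contra hc
          exact hp (by rw [hLz _ _ (by omega), smul_zero])
        · rcases lt_trichotomy p.2 0 with h2 | h2 | h2
          · exact absurd (by rw [pow2_F_supp 𝓕 N p.1 p.2 (Or.inr h2), zero_smul]) hp
          · exfalso
            have hp1 : p.1 ≠ (N : ℤ) := fun hc => hpp (Prod.ext hc h2)
            exact hp (by rw [h2, pow2_F_snd_zero 𝓕 N p.1, if_neg hp1, zero_smul])
          · omega
        · by_contra hc
          exact hp (by rw [A.vac_holo _ (n - p.2) (by omega), smul_zero])
      have hg'fin : (support g').Finite := by
        apply Set.Finite.subset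
          ((Finset.Icc (0:ℤ) (k + (N:ℤ) + n - N0) ×ˢ Finset.Icc (1:ℤ) n).finite_toSet)
        intro p hp
        rw [mem_support] at hp
        simp only [Finset.coe_product, Set.mem_prod, Finset.mem_coe, Finset.mem_Icc]
        simp only [hg'] at hp
        by_cases hpp : p = ((N : ℤ), (0 : ℤ))
        · exact absurd (if_pos hpp) hp
        rw [if_neg hpp] at hp
        have h2pos : 1 ≤ p.2 := by
          rcases lt_trichotomy p.2 0 with h2 | h2 | h2
          · exact absurd (by rw [pow2_F_supp 𝓕 N p.1 p.2 (Or.inr h2), zero_smul]) hp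
          · exfalso
            have hp1 : p.1 ≠ (N : ℤ) := fun hc => hpp (Prod.ext hc h2)
            exact hp (by rw [h2, pow2_F_snd_zero 𝓕 N p.1, if_neg hp1, zero_smul])
          · omega
        have h2n : p.2 ≤ n := by
          by_contra hc
          exact hp (by rw [Rr_neg A a b _ _ (by omega), smul_zero])
        refine ⟨⟨?_, ?_⟩, h2pos, h2n⟩
        · by_contra hc
          exact hp (by rw [pow2_F_supp 𝓕 N p.1 p.2 (Or.inl (by omega)), zero_smul])
        · by_contra hc
          exact hp (by
            rw [Rr_laurent A a b n.toNat N0 hN0 (k + (N:ℤ) - p.1) (n - p.2)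
              (by omega) (by omega), smul_zero])
      -- split off the `(N,0)` term on both sides
      set eL : ℤ × ℤ → V := fun p =>
        if p = ((N : ℤ), (0 : ℤ)) then A.Y (A.Y a b k) A.vac n else 0 with heL
      set eR : ℤ × ℤ → V := fun p =>
        if p = ((N : ℤ), (0 : ℤ)) then
          substFProd 𝓕 (fun v => A.Y a v) (A.Y b A.vac) k n else 0 with heR
      have heLfin : (support eL).Finite := by
        apply Set.Finite.subset (Set.finite_singleton ((N : ℤ), (0 : ℤ)))
        intro p hp
        rw [mem_support] at hp
        simp only [heL] at hp
        by_contra hc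
        exact hp (if_neg hc)
      have heRfin : (support eR).Finite := by
        apply Set.Finite.subset (Set.finite_singleton ((N : ℤ), (0 : ℤ)))
        intro p hp
        rw [mem_support] at hp
        simp only [heR] at hp
        by_contra hc
        exact hp (if_neg hc)
      have hsplitL : ∀ p : ℤ × ℤ,
          pow2 𝓕.F N p.1 p.2 • A.Y (A.Y a b (k + (N : ℤ) - p.1)) A.vac (n - p.2)
            = g p + eL p := by
        intro p
        by_cases hpp : p = ((N : ℤ), (0 : ℤ))
        · subst hpp
          simp only [hg, heL, if_pos rfl, zero_add]
          rw [pow2_F_snd_zero 𝓕 N (N : ℤ), if_pos rfl, one_smul,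
            (by ring : k + (N : ℤ) - (N : ℤ) = k), sub_zero]
        · simp only [hg, heL, if_neg hpp, add_zero]
      have hsplitR : ∀ p : ℤ × ℤ,
          pow2 𝓕.F N p.1 p.2 •
            substFProd 𝓕 (fun v => A.Y a v) (A.Y b A.vac) (k + (N : ℤ) - p.1) (n - p.2)
            = g' p + eR p := by
        intro p
        by_cases hpp : p = ((N : ℤ), (0 : ℤ))
        · subst hpp
          simp only [hg', heR, if_pos rfl, zero_add]
          rw [pow2_F_snd_zero 𝓕 N (N : ℤ), if_pos rfl, one_smul,
            (by ring : k + (N : ℤ) - (N : ℤ) = k), sub_zero]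
        · simp only [hg', heR, if_neg hpp, add_zero]
      have heLsum : (∑ᶠ p : ℤ × ℤ, eL p) = A.Y (A.Y a b k) A.vac n :=
        (finsum_eq_single eL ((N : ℤ), (0 : ℤ))
          (fun x hx => by simp only [heL]; exact if_neg hx)).trans
          (by simp [heL])
      have heRsum : (∑ᶠ p : ℤ × ℤ, eR p)
          = substFProd 𝓕 (fun v => A.Y a v) (A.Y b A.vac) k n :=
        (finsum_eq_single eR ((N : ℤ), (0 : ℤ))
          (fun x hx => by simp only [heR]; exact if_neg hx)).trans
          (by simp [heR])
      rw [finsum_congr hsplitL, finsum_congr hsplitR,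
        finsum_add_distrib hgfin heLfin, finsum_add_distrib hg'fin heRfin,
        heLsum, heRsum, hgg'] at h1
      exact add_left_cancel h1

end AuxLemmas4

/-- `i_{z,w} Y(a,F(z,w))(𝒮(w)b) = 𝒮(w)(Y(a,z)b)` in `V((z))⟦w⟧`,
coefficient of `z^k w^n`. -/
theorem shift_covariance (R : Type*) [CommRing R] (𝓕 : FormalGroupLaw R)
    (V : Type*) [AddCommGroup V] [Module R V] (A : VertexFAlgebra R 𝓕 V)
    (a b : V) (k : ℤ) (n : ℕ) :
    (∑ j ∈ Finset.range (n + 1), substF 𝓕 (A.Y a (A.S j b)) k ((n : ℤ) - (j : ℤ)))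
      = A.S n (A.Y a b k) := by
  obtain ⟨N, hEq⟩ := A.weak_assoc a b A.vac
  have hc := cancel A a b N hEq (n + 1) (n : ℤ) (by exact_mod_cast Nat.lt_succ_self n) k
  rw [Y_vac_eq A _ (n : ℤ), if_neg (by omega), (by omega : ((n : ℤ)).toNat = n),
    Rr_eq_sum A a b k n] at hc
  exact hc.symm
end

section
/- Let F be a formal group law over a commutative ring R. The F-delta distribution is supported on the diagonal: for every f ∈ R((z)), the products of the bilateral series z^{-1}δ_F(w/z) with f(z) and with f(w) converge and z^{-1}δ_F(w/z)·f(z) = z^{-1}δ_F(w/z)·f(w) in R⟦z^{±1},w^{±1}⟧. More generally, for every f(z,w) ∈ R((z,w)) the products below converge and z^{-1}δ_F(w/z)·f(z,w) = z^{-1}δ_F(w/z)·f(w,w), where f(w,w) ∈ R((w)) is the diagonal series whose coefficient of w^n is Σ_{i+j=n} a_{i,j} (a finite sum for f ∈ R((z,w))). -/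
/-!
Coefficient-wise formal calculus for vertex `F`-algebras, following
M. Upmeier, "Vertex F-Algebras and Their Associated Lie Algebra".

Series in one, two or three variables are represented by their coefficient
functions `ℤ → R`, `ℤ → ℤ → R`, …; products are given by coefficient-wise
(finite) sums, expressed via `finsum` (`∑ᶠ`).
-/

open scoped BigOperators

namespace DeltaAux

open Function

section Generic

variable {α β M : Type*} [AddCommMonoid M]

lemma support_comp_equiv_finite (e : α ≃ β) {f : β → M} (h : (support f).Finite) :
    (support fun a => f (e a)).Finite := by
  have : (support fun a => f (e a)) = e ⁻¹' support f := by
    ext a; simp [mem_support]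
  rw [this]
  exact h.preimage (e.injective.injOn)

lemma finsum_swap (T : α × β → M) (hT : (support T).Finite) :
    ∑ᶠ a : α, ∑ᶠ b : β, T (a, b) = ∑ᶠ b : β, ∑ᶠ a : α, T (a, b) := by
  rw [← finsum_curry T hT]
  have h2 : (support fun q : β × α => T (Equiv.prodComm β α q)).Finite :=
    support_comp_equiv_finite _ hT
  have h3 : ∑ᶠ b : β, ∑ᶠ a : α, T (a, b)
      = ∑ᶠ q : β × α, T (Equiv.prodComm β α q) := by
    rw [finsum_curry _ h2]
    rfl
  rw [h3, finsum_comp_equiv]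

lemma nat_bound_finite (X : ℤ) : {k : ℕ | (k : ℤ) ≤ X}.Finite := by
  apply Set.Finite.subset (Set.finite_Iic X.toNat)
  intro k hk
  simp only [Set.mem_setOf_eq] at hk
  simp only [Set.mem_Iic]
  omega

lemma exists_ne_zero_of_finsum_ne_zero {f : α → M} (h : ∑ᶠ a, f a ≠ 0) :
    ∃ a, f a ≠ 0 := by
  by_contra hc
  push_neg at hc
  exact h (finsum_eq_zero_of_forall_eq_zero hc)

end Generic

section CommRingR

variable {R : Type*} [CommRing R]

lemma mulS2_apply (f g : ℤ → ℤ → R) (a b : ℤ) :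
    mulS2 f g a b = ∑ᶠ p : ℤ × ℤ, f p.1 p.2 * g (a - p.1) (b - p.2) := by
  simp only [mulS2, smul_eq_mul]

/-- support cone for `R((z))⟦w⟧`-style series: `c1 ≤ j` and `c2 ≤ i + j` on the support. -/
def InCone (c1 c2 : ℤ) (f : ℤ → ℤ → R) : Prop :=
  ∀ i j : ℤ, f i j ≠ 0 → c1 ≤ j ∧ c2 ≤ i + j

lemma InCone.mono {c1 c2 c1' c2' : ℤ} {f : ℤ → ℤ → R} (h : InCone c1 c2 f)
    (h1 : c1' ≤ c1) (h2 : c2' ≤ c2) : InCone c1' c2' f := fun i j hij =>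
  ⟨le_trans h1 (h i j hij).1, le_trans h2 (h i j hij).2⟩

lemma oneS2_apply (a b : ℤ) : oneS2 R a b = if a = 0 ∧ b = 0 then 1 else 0 := rfl

lemma oneS2_eq_zero {a b : ℤ} (h : ¬(a = 0 ∧ b = 0)) : oneS2 R a b = 0 := by
  simp [oneS2, h]

lemma oneS2_inCone : InCone (R := R) 0 0 (oneS2 R) := by
  intro i j h
  have : i = 0 ∧ j = 0 := by
    by_contra hc
    exact h (oneS2_eq_zero hc)
  omega

lemma support_cone_finite {c1 c2 d1 d2 : ℤ} {f g : ℤ → ℤ → R}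
    (hf : InCone c1 c2 f) (hg : InCone d1 d2 g) (a b : ℤ) :
    (support fun p : ℤ × ℤ => f p.1 p.2 * g (a - p.1) (b - p.2)).Finite := by
  apply Set.Finite.subset
    (Set.Finite.prod (Set.finite_Icc (c2 - (b - d1)) (a + b - d2 - c1))
      (Set.finite_Icc c1 (b - d1)))
  rintro ⟨i, j⟩ hp
  simp only [mem_support] at hp
  have h1 : f i j ≠ 0 := fun h => hp (by simp [h])
  have h2 : g (a - i) (b - j) ≠ 0 := fun h => hp (by simp [h])
  obtain ⟨hj, hij⟩ := hf i j h1
  obtain ⟨hj', hij'⟩ := hg _ _ h2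
  simp only [Set.mem_prod, Set.mem_Icc]
  omega

lemma InCone.mulS2 {c1 c2 d1 d2 : ℤ} {f g : ℤ → ℤ → R}
    (hf : InCone c1 c2 f) (hg : InCone d1 d2 g) :
    InCone (c1 + d1) (c2 + d2) (_root_.mulS2 f g) := by
  intro a b hab
  by_contra hcon
  apply hab
  rw [mulS2_apply]
  apply finsum_eq_zero_of_forall_eq_zero
  rintro ⟨i, j⟩
  rcases eq_or_ne (f i j) 0 with h | h
  · simp [h]
  rcases eq_or_ne (g (a - i) (b - j)) 0 with h' | h'
  · simp [h']
  obtain ⟨hj, hij⟩ := hf i j h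
  obtain ⟨hj', hij'⟩ := hg _ _ h'
  exfalso; apply hcon
  constructor <;> omega

lemma mulS2_comm (f g : ℤ → ℤ → R) : mulS2 f g = mulS2 g f := by
  funext a b
  rw [mulS2_apply, mulS2_apply]
  apply finsum_eq_of_bijective (fun p : ℤ × ℤ => (a - p.1, b - p.2))
  · apply Function.Involutive.bijective
    intro p; simp
  · rintro ⟨i, j⟩
    show f i j * g (a - i) (b - j) = g (a - i) (b - j) * f (a - (a - i)) (b - (b - j))
    have h1 : a - (a - i) = i := by omega
    have h2 : b - (b - j) = j := by omega
    rw [h1, h2, mul_comm]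

lemma mulS2_one (f : ℤ → ℤ → R) : mulS2 (oneS2 R) f = f := by
  funext a b
  rw [mulS2_apply]
  rw [finsum_eq_single _ ((0 : ℤ), (0 : ℤ))]
  · simp [oneS2]
  · rintro ⟨i, j⟩ hp
    have : ¬(i = 0 ∧ j = 0) := by
      intro ⟨h1, h2⟩; exact hp (by simp [h1, h2])
    simp [oneS2_eq_zero this]

lemma mulS2_one_right (f : ℤ → ℤ → R) : mulS2 f (oneS2 R) = f := by
  rw [mulS2_comm, mulS2_one]

end CommRingR

end DeltaAux
namespace DeltaAux

open Function

section Algebra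

variable {R : Type*} [CommRing R]

lemma support_triple_finite {c1 c2 d1 d2 e1 e2 : ℤ} {f g h : ℤ → ℤ → R}
    (hf : InCone c1 c2 f) (hg : InCone d1 d2 g) (hh : InCone e1 e2 h) (a b : ℤ) :
    (support fun P : (ℤ × ℤ) × (ℤ × ℤ) =>
      f P.1.1 P.1.2 * (g P.2.1 P.2.2 * h (a - P.1.1 - P.2.1) (b - P.1.2 - P.2.2))).Finite := by
  apply Set.Finite.subset
    ((Set.Finite.prod (Set.finite_Icc (c2 - (b - d1 - e1)) (a + b - d2 - e2 - c1))
        (Set.finite_Icc c1 (b - d1 - e1))).prod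
      (Set.Finite.prod (Set.finite_Icc (d2 - (b - c1 - e1)) (a + b - c2 - e2 - d1))
        (Set.finite_Icc d1 (b - c1 - e1))))
  rintro ⟨⟨i, j⟩, ⟨k, l⟩⟩ hp
  simp only [mem_support] at hp
  have h1 : f i j ≠ 0 := fun hq => hp (by simp [hq])
  have h2 : g k l ≠ 0 := fun hq => hp (by simp [hq])
  have h3 : h (a - i - k) (b - j - l) ≠ 0 := fun hq => hp (by simp [hq])
  obtain ⟨q1, q2⟩ := hf i j h1
  obtain ⟨q3, q4⟩ := hg k l h2
  obtain ⟨q5, q6⟩ := hh _ _ h3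
  simp only [Set.mem_prod, Set.mem_Icc]
  omega

lemma support_triple_finite' {c1 c2 d1 d2 e1 e2 : ℤ} {f g h : ℤ → ℤ → R}
    (hf : InCone c1 c2 f) (hg : InCone d1 d2 g) (hh : InCone e1 e2 h) (a b : ℤ) :
    (support fun Q : (ℤ × ℤ) × (ℤ × ℤ) =>
      f Q.2.1 Q.2.2 * g (Q.1.1 - Q.2.1) (Q.1.2 - Q.2.2) * h (a - Q.1.1) (b - Q.1.2)).Finite := by
  apply Set.Finite.subset
    ((Set.Finite.prod (Set.finite_Icc (c2 + d2 - (b - e1)) (a + b - e2 - (c1 + d1)))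
        (Set.finite_Icc (c1 + d1) (b - e1))).prod
      (Set.Finite.prod (Set.finite_Icc (c2 - (b - d1 - e1)) (a + b - d2 - e2 - c1))
        (Set.finite_Icc c1 (b - d1 - e1))))
  rintro ⟨⟨i, j⟩, ⟨k, l⟩⟩ hp
  simp only [mem_support] at hp
  have h1 : f k l ≠ 0 := fun hq => hp (by simp [hq])
  have h2 : g (i - k) (j - l) ≠ 0 := fun hq => hp (by simp [hq])
  have h3 : h (a - i) (b - j) ≠ 0 := fun hq => hp (by simp [hq])
  obtain ⟨q1, q2⟩ := hf k l h1
  obtain ⟨q3, q4⟩ := hg _ _ h2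
  obtain ⟨q5, q6⟩ := hh _ _ h3
  simp only [Set.mem_prod, Set.mem_Icc]
  omega

lemma mulS2_assoc {c1 c2 d1 d2 e1 e2 : ℤ} {f g h : ℤ → ℤ → R}
    (hf : InCone c1 c2 f) (hg : InCone d1 d2 g) (hh : InCone e1 e2 h) :
    mulS2 (mulS2 f g) h = mulS2 f (mulS2 g h) := by
  funext a b
  have lhs_eq : mulS2 (mulS2 f g) h a b
      = ∑ᶠ Q : (ℤ × ℤ) × (ℤ × ℤ),
          f Q.2.1 Q.2.2 * g (Q.1.1 - Q.2.1) (Q.1.2 - Q.2.2) * h (a - Q.1.1) (b - Q.1.2) := by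
    rw [mulS2_apply]
    rw [finsum_curry _ (support_triple_finite' hf hg hh a b)]
    apply finsum_congr
    rintro ⟨i, j⟩
    rw [mulS2_apply]
    exact finsum_mul' _ _ (support_cone_finite hf hg i j)
  have rhs_eq : mulS2 f (mulS2 g h) a b
      = ∑ᶠ P : (ℤ × ℤ) × (ℤ × ℤ),
          f P.1.1 P.1.2 * (g P.2.1 P.2.2 * h (a - P.1.1 - P.2.1) (b - P.1.2 - P.2.2)) := by
    rw [mulS2_apply]
    rw [finsum_curry _ (support_triple_finite hf hg hh a b)]
    apply finsum_congr
    rintro ⟨i, j⟩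
    rw [mulS2_apply]
    exact mul_finsum' _ _ (support_cone_finite hg hh (a - i) (b - j))
  rw [lhs_eq, rhs_eq]
  symm
  apply finsum_eq_of_bijective
    (fun P : (ℤ × ℤ) × (ℤ × ℤ) => ((P.1.1 + P.2.1, P.1.2 + P.2.2), P.1))
  · constructor
    · rintro ⟨⟨i, j⟩, ⟨k, l⟩⟩ ⟨⟨i', j'⟩, ⟨k', l'⟩⟩ hP
      simp only [Prod.mk.injEq] at hP ⊢
      omega
    · rintro ⟨⟨i, j⟩, ⟨k, l⟩⟩
      exact ⟨((k, l), (i - k, j - l)), by simp⟩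
  · rintro ⟨⟨i, j⟩, ⟨k, l⟩⟩
    show f i j * (g k l * h (a - i - k) (b - j - l))
      = f i j * g (i + k - i) (j + l - j) * h (a - (i + k)) (b - (j + l))
    have e1 : i + k - i = k := by omega
    have e2 : j + l - j = l := by omega
    have e3 : a - (i + k) = a - i - k := by omega
    have e4 : b - (j + l) = b - j - l := by omega
    rw [e1, e2, e3, e4, mul_assoc]

/-- multiplication by `z^n` in coefficient form. -/
def shz (n : ℤ) (f : ℤ → ℤ → R) : ℤ → ℤ → R := fun a b => f (a - n) b

lemma mulS2_shz_left (n : ℤ) (f g : ℤ → ℤ → R) :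
    mulS2 (shz n f) g = shz n (mulS2 f g) := by
  funext a b
  rw [mulS2_apply]
  show _ = mulS2 f g (a - n) b
  rw [mulS2_apply]
  apply finsum_eq_of_bijective (fun p : ℤ × ℤ => (p.1 - n, p.2))
  · constructor
    · rintro ⟨i, j⟩ ⟨i', j'⟩ hP
      simp only [Prod.mk.injEq] at hP ⊢
      omega
    · rintro ⟨i, j⟩
      exact ⟨(i + n, j), by simp⟩
  · rintro ⟨i, j⟩
    show shz n f i j * g (a - i) (b - j) = f (i - n) j * g (a - n - (i - n)) (b - j)
    have e1 : a - n - (i - n) = a - i := by omega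
    rw [e1]
    rfl

lemma shz_shz (m n : ℤ) (f : ℤ → ℤ → R) : shz m (shz n f) = shz (m + n) f := by
  funext a b
  show f (a - m - n) b = f (a - (m + n)) b
  congr 1
  omega

lemma shz_zero (f : ℤ → ℤ → R) : shz 0 f = f := by
  funext a b
  show f (a - 0) b = f a b
  norm_num

lemma mulS2_shz_cancel (f g : ℤ → ℤ → R) :
    mulS2 (shz 1 f) (shz (-1) g) = mulS2 f g := by
  rw [mulS2_shz_left, mulS2_comm f, mulS2_shz_left, shz_shz, mulS2_comm g]
  norm_num [shz_zero]

lemma mulS2_neg_left (f g : ℤ → ℤ → R) :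
    mulS2 (fun i j => -f i j) g = fun a b => -(mulS2 f g a b) := by
  funext a b
  rw [mulS2_apply, mulS2_apply]
  rw [← finsum_neg_distrib]
  apply finsum_congr
  rintro ⟨i, j⟩
  show -f i j * g (a - i) (b - j) = -(f i j * g (a - i) (b - j))
  ring

lemma mulS2_neg_right (f g : ℤ → ℤ → R) :
    mulS2 f (fun i j => -g i j) = fun a b => -(mulS2 f g a b) := by
  funext a b
  rw [mulS2_apply, mulS2_apply]
  rw [← finsum_neg_distrib]
  apply finsum_congr
  rintro ⟨i, j⟩
  show f i j * -(g (a - i) (b - j)) = -(f i j * g (a - i) (b - j))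
  ring

lemma mulS2_neg_neg (f g : ℤ → ℤ → R) :
    mulS2 (fun i j => -f i j) (fun i j => -g i j) = mulS2 f g := by
  rw [mulS2_neg_left]
  funext a b
  show -(mulS2 f (fun i j => -g i j) a b) = _
  rw [congrFun (congrFun (mulS2_neg_right f g) a) b, neg_neg]

lemma mulS2_add_left {c1 c2 c1' c2' d1 d2 : ℤ} {f f' g : ℤ → ℤ → R}
    (hf : InCone c1 c2 f) (hf' : InCone c1' c2' f') (hg : InCone d1 d2 g) :
    mulS2 (fun i j => f i j + f' i j) g = fun a b => mulS2 f g a b + mulS2 f' g a b := by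
  funext a b
  rw [mulS2_apply, mulS2_apply, mulS2_apply]
  rw [← finsum_add_distrib (support_cone_finite hf hg a b) (support_cone_finite hf' hg a b)]
  apply finsum_congr
  rintro ⟨i, j⟩
  show (f i j + f' i j) * g (a - i) (b - j) = _
  ring

end Algebra

end DeltaAux
namespace DeltaAux

open Function

section Geom

variable {R : Type*} [CommRing R]

lemma pow2_succ (f : ℤ → ℤ → R) (k : ℕ) : pow2 f (k + 1) = mulS2 f (pow2 f k) := rfl

lemma pow2_zero' (f : ℤ → ℤ → R) : pow2 f 0 = oneS2 R := rfl

lemma pow2_inCone {c1 c2 : ℤ} {f : ℤ → ℤ → R} (hf : InCone c1 c2 f)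
    (h1 : 0 ≤ c1) (h2 : 0 ≤ c2) (k : ℕ) : InCone 0 0 (pow2 f k) := by
  induction k with
  | zero => exact oneS2_inCone
  | succ k ih =>
    rw [pow2_succ]
    exact (hf.mulS2 ih).mono (by omega) (by omega)

lemma pow2_strict {s t : ℤ} {f : ℤ → ℤ → R}
    (hst : ∀ i j : ℤ, f i j ≠ 0 → 1 ≤ s * i + t * j) :
    ∀ (k : ℕ) (a b : ℤ), pow2 f k a b ≠ 0 → (k : ℤ) ≤ s * a + t * b := by
  intro k
  induction k with
  | zero =>
    intro a b h
    have hab : a = 0 ∧ b = 0 := by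
      by_contra hc
      exact h (oneS2_eq_zero hc)
    obtain ⟨rfl, rfl⟩ := hab
    simp
  | succ k ih =>
    intro a b h
    rw [pow2_succ, mulS2_apply] at h
    obtain ⟨⟨i, j⟩, hp⟩ := exists_ne_zero_of_finsum_ne_zero h
    have h1 : f i j ≠ 0 := fun hq => hp (by simp [hq])
    have h2 : pow2 f k (a - i) (b - j) ≠ 0 := fun hq => hp (by simp [hq])
    have e1 := hst i j h1
    have e2 := ih _ _ h2
    have e3 : s * (a - i) + t * (b - j) = s * a + t * b - (s * i + t * j) := by ring
    push_cast
    linarith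

/-- geometric series `∑ (-1)^k f^k`. -/
noncomputable def geomS (f : ℤ → ℤ → R) : ℤ → ℤ → R := fun a b => ∑ᶠ k : ℕ, (-1 : R) ^ k * pow2 f k a b

lemma geomS_inCone {c1 c2 : ℤ} {f : ℤ → ℤ → R} (hf : InCone c1 c2 f)
    (h1 : 0 ≤ c1) (h2 : 0 ≤ c2) : InCone 0 0 (geomS f) := by
  intro a b h
  by_contra hc
  apply h
  apply finsum_eq_zero_of_forall_eq_zero
  intro k
  rcases eq_or_ne (pow2 f k a b) 0 with hq | hq
  · simp [hq]
  · exact absurd (pow2_inCone hf h1 h2 k a b hq) hc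

lemma geomS_support_k {s t : ℤ} {f : ℤ → ℤ → R}
    (hst : ∀ i j : ℤ, f i j ≠ 0 → 1 ≤ s * i + t * j) (a b : ℤ) :
    (support fun k : ℕ => (-1 : R) ^ k * pow2 f k a b).Finite := by
  apply Set.Finite.subset (nat_bound_finite (s * a + t * b))
  intro k hk
  simp only [mem_support] at hk
  have h2 : pow2 f k a b ≠ 0 := fun hq => hk (by simp [hq])
  exact pow2_strict hst k a b h2

lemma mulS2_one_add_geomS {c1 c2 s t : ℤ} {f : ℤ → ℤ → R}
    (hf : InCone c1 c2 f) (h1 : 0 ≤ c1) (h2 : 0 ≤ c2)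
    (hst : ∀ i j : ℤ, f i j ≠ 0 → 1 ≤ s * i + t * j) :
    mulS2 (fun i j => oneS2 R i j + f i j) (geomS f) = oneS2 R := by
  have hf' : InCone 0 0 f := hf.mono h1 h2
  have hgeom : InCone 0 0 (geomS f) := geomS_inCone hf h1 h2
  have hpow := pow2_inCone hf h1 h2
  funext a b
  rw [congrFun (congrFun (mulS2_add_left oneS2_inCone hf' hgeom) a) b,
    congrFun (congrFun (mulS2_one (geomS f)) a) b]
  -- key step : mulS2 f (geomS f) a b = ∑ᶠ k : ℕ, (-1)^k * pow2 f (k+1) a b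
  have key : mulS2 f (geomS f) a b = ∑ᶠ k : ℕ, (-1 : R) ^ k * pow2 f (k + 1) a b := by
    set W : (ℤ × ℤ) × ℕ → R :=
      fun P => f P.1.1 P.1.2 * ((-1 : R) ^ P.2 * pow2 f P.2 (a - P.1.1) (b - P.1.2)) with hW
    have hWfin : (support W).Finite := by
      apply Set.Finite.subset
        ((Set.Finite.prod (Set.finite_Icc (c2 - b) (a + b - c1)) (Set.finite_Icc c1 b)).prod
          (nat_bound_finite (s * a + t * b)))
      rintro ⟨⟨i, j⟩, k⟩ hp
      simp only [mem_support, hW] at hp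
      have q1 : f i j ≠ 0 := fun hq => hp (by simp [hq])
      have q2 : pow2 f k (a - i) (b - j) ≠ 0 := fun hq => hp (by simp [hq])
      obtain ⟨r1, r2⟩ := hf i j q1
      obtain ⟨r3, r4⟩ := hpow k _ _ q2
      have r5 := pow2_strict hst k _ _ q2
      have r6 := hst i j q1
      have e3 : s * (a - i) + t * (b - j) = s * a + t * b - (s * i + t * j) := by ring
      have hkb : (k : ℤ) ≤ s * a + t * b := by linarith
      rw [Set.mem_prod]
      constructor
      · simp only [Set.mem_prod, Set.mem_Icc]
        omega
      · simpa using hkb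
    have step1 : mulS2 f (geomS f) a b = ∑ᶠ p : ℤ × ℤ, ∑ᶠ k : ℕ, W (p, k) := by
      rw [mulS2_apply]
      apply finsum_congr
      rintro ⟨i, j⟩
      exact mul_finsum' _ _ (geomS_support_k hst (a - i) (b - j))
    rw [step1, finsum_swap W hWfin]
    apply finsum_congr
    intro k
    have : ∀ p : ℤ × ℤ, W (p, k) = (-1 : R) ^ k * (f p.1 p.2 * pow2 f k (a - p.1) (b - p.2)) := by
      rintro ⟨i, j⟩
      simp only [hW]
      ring
    rw [finsum_congr this, ← mul_finsum' _ _ (support_cone_finite hf' (hpow k) a b),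
      pow2_succ, mulS2_apply]
  rw [key]
  -- telescoping
  set K : ℕ := (s * a + t * b).toNat + 1 with hK
  set u : ℕ → R := fun k => (-1 : R) ^ k * pow2 f k a b with hu
  have hb1 : support (fun k : ℕ => (-1 : R) ^ k * pow2 f k a b) ⊆ ↑(Finset.range (K + 1)) := by
    intro k hk
    simp only [mem_support] at hk
    have h2 : pow2 f k a b ≠ 0 := fun hq => hk (by simp [hq])
    have := pow2_strict hst k a b h2
    simp only [Finset.coe_range, Set.mem_Iio]
    omega
  have hb2 : support (fun k : ℕ => (-1 : R) ^ k * pow2 f (k + 1) a b)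
      ⊆ ↑(Finset.range (K + 1)) := by
    intro k hk
    simp only [mem_support] at hk
    have h2 : pow2 f (k + 1) a b ≠ 0 := fun hq => hk (by simp [hq])
    have := pow2_strict hst (k + 1) a b h2
    simp only [Finset.coe_range, Set.mem_Iio]
    push_cast at this
    omega
  show geomS f a b + _ = _
  rw [show geomS f a b = ∑ᶠ k : ℕ, (-1 : R) ^ k * pow2 f k a b from rfl]
  rw [finsum_eq_sum_of_support_subset _ hb1, finsum_eq_sum_of_support_subset _ hb2]
  rw [← Finset.sum_add_distrib]
  have : ∀ k ∈ Finset.range (K + 1),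
      (-1 : R) ^ k * pow2 f k a b + (-1 : R) ^ k * pow2 f (k + 1) a b = u k - u (k + 1) := by
    intro k _
    simp only [hu, pow_succ]
    ring
  rw [Finset.sum_congr rfl this, Finset.sum_range_sub' u (K + 1)]
  have hlast : pow2 f (K + 1) a b = 0 := by
    by_contra hq
    have := pow2_strict hst (K + 1) a b hq
    push_cast at this
    omega
  simp only [hu, hlast, pow_zero, mul_zero, sub_zero, pow2_zero', one_mul]

/-- transpose (swap of the two variables). -/
def trS (f : ℤ → ℤ → R) : ℤ → ℤ → R := fun a b => f b a

lemma trS_trS (f : ℤ → ℤ → R) : trS (trS f) = f := rfl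

lemma trS_oneS2 : trS (oneS2 R) = oneS2 R := by
  funext a b
  simp only [trS, oneS2]
  by_cases h : a = 0 <;> by_cases h' : b = 0 <;> simp [h, h']

lemma trS_mulS2 (f g : ℤ → ℤ → R) : trS (mulS2 f g) = mulS2 (trS f) (trS g) := by
  funext a b
  show mulS2 f g b a = _
  rw [mulS2_apply, mulS2_apply]
  symm
  apply finsum_eq_of_bijective (fun p : ℤ × ℤ => (p.2, p.1))
  · exact ⟨fun p q h => by simpa [Prod.ext_iff, and_comm] using h,
      fun p => ⟨(p.2, p.1), rfl⟩⟩
  · rintro ⟨i, j⟩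
    rfl

lemma trS_pow2 (f : ℤ → ℤ → R) (k : ℕ) : trS (pow2 f k) = pow2 (trS f) k := by
  induction k with
  | zero => exact trS_oneS2
  | succ k ih => rw [pow2_succ, pow2_succ, trS_mulS2, ih]

lemma trS_inCone {c1 c2 : ℤ} {f : ℤ → ℤ → R} (hf : ∀ i j, f i j ≠ 0 → c1 ≤ i ∧ c2 ≤ i + j) :
    InCone c1 c2 (trS f) := by
  intro i j h
  obtain ⟨h1, h2⟩ := hf j i h
  exact ⟨h1, by omega⟩

lemma mulS2_inv_unique {x1 x2 y1 y2 g1 g2 : ℤ} {X Y G : ℤ → ℤ → R}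
    (hX : InCone x1 x2 X) (hY : InCone y1 y2 Y) (hG : InCone g1 g2 G)
    (hXG : mulS2 X G = oneS2 R) (hYG : mulS2 Y G = oneS2 R) : X = Y :=
  calc X = mulS2 X (oneS2 R) := (mulS2_one_right X).symm
    _ = mulS2 X (mulS2 Y G) := by rw [hYG]
    _ = mulS2 X (mulS2 G Y) := by rw [mulS2_comm Y G]
    _ = mulS2 (mulS2 X G) Y := (mulS2_assoc hX hG hY).symm
    _ = Y := by rw [hXG, mulS2_one]

lemma mul4_shuffle {f1 f2 g1 g2 h1 h2 k1 k2 : ℤ} {f g h k : ℤ → ℤ → R}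
    (hf : InCone f1 f2 f) (hg : InCone g1 g2 g) (hh : InCone h1 h2 h)
    (hk : InCone k1 k2 k) :
    mulS2 (mulS2 f g) (mulS2 h k) = mulS2 (mulS2 f k) (mulS2 g h) :=
  calc mulS2 (mulS2 f g) (mulS2 h k)
      = mulS2 f (mulS2 g (mulS2 h k)) := mulS2_assoc hf hg (hh.mulS2 hk)
    _ = mulS2 f (mulS2 (mulS2 g h) k) := by rw [mulS2_assoc hg hh hk]
    _ = mulS2 f (mulS2 k (mulS2 g h)) := by rw [mulS2_comm (mulS2 g h) k]
    _ = mulS2 (mulS2 f k) (mulS2 g h) := (mulS2_assoc hf hk (hg.mulS2 hh)).symm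

end Geom

end DeltaAux
namespace DeltaAux

open Function

section FGL

variable {R : Type*} [CommRing R] (𝓕 : FormalGroupLaw R)

lemma oneS_ne {j : ℤ} (h : oneS R j ≠ 0) : j = 0 := by
  by_contra hc
  exact h (by simp [oneS, hc])

lemma zbinom_neg_one (k : ℕ) : zbinom (-1) k = (-1) ^ k := by
  have h1 : ¬ (0:ℤ) ≤ -1 := by norm_num
  rw [zbinom, if_neg h1, show ((k : ℤ) - (-1) - 1).toNat = k by omega, Nat.choose_self]
  simp

lemma msign_neg_one : msign (-1) = -1 := by
  rw [msign, if_neg (by decide : ¬ Even (-1 : ℤ))]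

lemma F_ne {i j : ℤ} (h : 𝓕.F i j ≠ 0) : 0 ≤ i ∧ 0 ≤ j := by
  by_contra hc
  exact h (𝓕.F_supp i j (by omega))

lemma F_zero_right {i : ℤ} : 𝓕.F i 0 = if i = 1 then 1 else 0 := 𝓕.F_modw i

lemma F_zero_left {m : ℤ} : 𝓕.F 0 m = if m = 1 then 1 else 0 := by
  rw [𝓕.F_comm]; exact 𝓕.F_modw m

lemma pow1_inv_supp : ∀ (k : ℕ) (j : ℤ), pow1 𝓕.inv k j ≠ 0 → (k : ℤ) ≤ j := by
  intro k
  induction k with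
  | zero =>
    intro j h
    have : j = 0 := oneS_ne h
    omega
  | succ k ih =>
    intro j h
    have h' : (∑ᶠ i : ℤ, 𝓕.inv i * pow1 𝓕.inv k (j - i)) ≠ 0 := by
      simpa [pow1, mulS, smul_eq_mul] using h
    obtain ⟨i, hi⟩ := exists_ne_zero_of_finsum_ne_zero h'
    have h1 : 𝓕.inv i ≠ 0 := fun hq => hi (by simp [hq])
    have h2 : pow1 𝓕.inv k (j - i) ≠ 0 := fun hq => hi (by simp [hq])
    have e1 : 1 ≤ i := by
      by_contra hc
      exact h1 (𝓕.inv_supp i (by omega))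
    have e2 := ih _ h2
    push_cast
    omega

lemma Fzi_apply (i j : ℤ) : 𝓕.Fzi i j = ∑ᶠ m : ℕ, 𝓕.F i (m : ℤ) * pow1 𝓕.inv m j := rfl

lemma Fzi_supp {i j : ℤ} (h : 𝓕.Fzi i j ≠ 0) : 0 ≤ i ∧ 0 ≤ j ∧ 1 ≤ i + j := by
  rw [Fzi_apply] at h
  obtain ⟨m, hm⟩ := exists_ne_zero_of_finsum_ne_zero h
  have h1 : 𝓕.F i (m : ℤ) ≠ 0 := fun hq => hm (by simp [hq])
  have h2 : pow1 𝓕.inv m j ≠ 0 := fun hq => hm (by simp [hq])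
  have e1 := F_ne 𝓕 h1
  have e2 := pow1_inv_supp 𝓕 m j h2
  rcases Nat.eq_zero_or_pos m with hm0 | hm1
  · subst hm0
    have : j = 0 := oneS_ne h2
    subst this
    have : i = 1 := by
      by_contra hc
      apply h1
      rw [Nat.cast_zero, F_zero_right, if_neg hc]
    omega
  · have : (1 : ℤ) ≤ (m : ℤ) := by exact_mod_cast hm1
    omega

lemma Fzi_zero_right (i : ℤ) : 𝓕.Fzi i 0 = if i = 1 then 1 else 0 := by
  rw [Fzi_apply, finsum_eq_single _ 0]
  · simp [pow1, oneS, F_zero_right]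
  · intro m hm
    have : pow1 𝓕.inv m 0 = 0 := by
      by_contra hc
      have := pow1_inv_supp 𝓕 m 0 hc
      omega
    simp [this]

lemma pow1_inv_one_one : pow1 𝓕.inv 1 1 = -1 := by
  show mulS 𝓕.inv (pow1 𝓕.inv 0) 1 = -1
  rw [show mulS 𝓕.inv (pow1 𝓕.inv 0) 1 = ∑ᶠ i : ℤ, 𝓕.inv i * oneS R (1 - i) from by
    simp [mulS, pow1, smul_eq_mul]]
  rw [finsum_eq_single _ 1]
  · simp [oneS, 𝓕.inv_one]
  · intro i hi
    have : oneS R (1 - i) = 0 := by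
      simp [oneS]; omega
    simp [this]

lemma Fzi_zero_one : 𝓕.Fzi 0 1 = -1 := by
  rw [Fzi_apply, finsum_eq_single _ 1]
  · rw [Nat.cast_one, F_zero_left, if_pos rfl, pow1_inv_one_one]
    ring
  · intro m hm
    rcases Nat.eq_zero_or_pos m with hm0 | hm1
    · subst hm0
      simp [pow1, oneS]
    · have h2 : 2 ≤ m := by omega
      have : pow1 𝓕.inv m 1 = 0 := by
        by_contra hc
        have := pow1_inv_supp 𝓕 m 1 hc
        omega
      simp [this]

lemma Fzi_diag (n : ℤ) : ∑ᶠ m : ℤ, 𝓕.Fzi m (n - m) = 0 := by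
  have h0 := 𝓕.inv_eq n
  have hTfin : (support fun p : ℤ × ℕ =>
      𝓕.F p.1 (p.2 : ℤ) * pow1 𝓕.inv p.2 (n - p.1)).Finite := by
    apply Set.Finite.subset ((Set.finite_Icc (0 : ℤ) n).prod (nat_bound_finite n))
    rintro ⟨m, k⟩ hp
    simp only [mem_support] at hp
    have h1 : 𝓕.F m (k : ℤ) ≠ 0 := fun hq => hp (by simp [hq])
    have h2 : pow1 𝓕.inv k (n - m) ≠ 0 := fun hq => hp (by simp [hq])
    have e1 := F_ne 𝓕 h1
    have e2 := pow1_inv_supp 𝓕 k _ h2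
    simp only [Set.mem_prod, Set.mem_Icc, Set.mem_setOf_eq]
    omega
  calc ∑ᶠ m : ℤ, 𝓕.Fzi m (n - m)
      = ∑ᶠ (m : ℤ) (k : ℕ), 𝓕.F m (k : ℤ) * pow1 𝓕.inv k (n - m) :=
        finsum_congr fun m => rfl
    _ = ∑ᶠ p : ℤ × ℕ, 𝓕.F p.1 (p.2 : ℤ) * pow1 𝓕.inv p.2 (n - p.1) :=
        (finsum_curry _ hTfin).symm
    _ = 0 := h0

end FGL

end DeltaAux
namespace DeltaAux

open Function

section Main

variable {R : Type*} [CommRing R] (𝓕 : FormalGroupLaw R)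

lemma Fzi_eq_zero {i j : ℤ} (h : ¬(0 ≤ i ∧ 0 ≤ j ∧ 1 ≤ i + j)) : 𝓕.Fzi i j = 0 := by
  by_contra hc
  exact h (Fzi_supp 𝓕 hc)

lemma hzS_supp {i j : ℤ} (h : hzS 𝓕.Fzi i j ≠ 0) : 1 ≤ j ∧ 0 ≤ i + j := by
  have hval : hzS 𝓕.Fzi i j = 𝓕.Fzi (i + 1) j - oneS2 R i j := rfl
  rcases lt_trichotomy j 0 with hj | hj | hj
  · exfalso
    apply h
    rw [hval, Fzi_eq_zero 𝓕 (by omega), oneS2_eq_zero (by omega), sub_zero]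
  · exfalso
    apply h
    subst hj
    rw [hval, Fzi_zero_right]
    by_cases hi : i = 0
    · subst hi; simp [oneS2]
    · rw [if_neg (by omega), oneS2_eq_zero (by simp [hi]), sub_zero]
  · have h1 : 𝓕.Fzi (i + 1) j ≠ 0 := by
      intro hq
      apply h
      rw [hval, hq, oneS2_eq_zero (by omega), sub_zero]
    have := Fzi_supp 𝓕 h1
    omega

lemma hzS_inCone : InCone 1 0 (hzS 𝓕.Fzi) := fun _ _ h => hzS_supp 𝓕 h

lemma hwNegS_supp {i j : ℤ} (h : hwNegS 𝓕.Fzi i j ≠ 0) :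
    0 ≤ i ∧ 0 ≤ i + j ∧ 1 ≤ 2 * i + j := by
  have hval : hwNegS 𝓕.Fzi i j = -𝓕.Fzi i (j + 1) - oneS2 R i j := rfl
  by_cases hij : i = 0 ∧ j = 0
  · exfalso
    apply h
    obtain ⟨rfl, rfl⟩ := hij
    rw [hval, show (0:ℤ) + 1 = 1 by norm_num, Fzi_zero_one]
    simp [oneS2]
  · have h1 : 𝓕.Fzi i (j + 1) ≠ 0 := by
      intro hq
      apply h
      rw [hval, hq, oneS2_eq_zero hij, neg_zero, sub_zero]
    have := Fzi_supp 𝓕 h1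
    omega

lemma Fzi_inCone : InCone 0 1 𝓕.Fzi := fun i j h => by
  have := Fzi_supp 𝓕 h
  exact ⟨this.2.1, this.2.2⟩

lemma Fzi_eq_shz : 𝓕.Fzi = shz 1 (fun i j => oneS2 R i j + hzS 𝓕.Fzi i j) := by
  funext a b
  show 𝓕.Fzi a b = oneS2 R (a - 1) b + (𝓕.Fzi (a - 1 + 1) b - oneS2 R (a - 1) b)
  rw [show a - 1 + 1 = a by omega]
  ring

lemma izwPow_eq : izwPow 𝓕.Fzi (-1) = shz (-1) (geomS (hzS 𝓕.Fzi)) := by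
  funext a b
  show (∑ᶠ k : ℕ, (zbinom (-1) k : R) * pow2 (hzS 𝓕.Fzi) k (a - (-1)) b)
    = geomS (hzS 𝓕.Fzi) (a - (-1)) b
  apply finsum_congr
  intro k
  rw [zbinom_neg_one]
  push_cast
  ring_nf

lemma hzS_strict : ∀ i j : ℤ, hzS 𝓕.Fzi i j ≠ 0 → 1 ≤ 0 * i + 1 * j := by
  intro i j h
  have := hzS_supp 𝓕 h
  omega

lemma GX_one : mulS2 𝓕.Fzi (izwPow 𝓕.Fzi (-1)) = oneS2 R := by
  have h1 : mulS2 𝓕.Fzi (izwPow 𝓕.Fzi (-1))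
      = mulS2 (shz 1 (fun i j => oneS2 R i j + hzS 𝓕.Fzi i j))
          (shz (-1) (geomS (hzS 𝓕.Fzi))) := by
    rw [← Fzi_eq_shz, ← izwPow_eq]
  rw [h1, mulS2_shz_cancel]
  exact mulS2_one_add_geomS (hzS_inCone 𝓕) (by norm_num) le_rfl (hzS_strict 𝓕)

lemma X_inCone : InCone 0 (-1) (izwPow 𝓕.Fzi (-1)) := by
  intro a b h
  rw [congrFun (congrFun (izwPow_eq 𝓕) a) b] at h
  have := geomS_inCone (hzS_inCone 𝓕) (by norm_num) le_rfl (a - -1) b h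
  omega

/-- the unit power series `u` with `F(z, ι(w)) = (z - w) u(z,w)`. -/
noncomputable def uS : ℤ → ℤ → R := fun i j =>
  if 0 ≤ i ∧ 0 ≤ j then ∑ m ∈ Finset.Icc (i + 1) (i + j + 1), 𝓕.Fzi m (i + j + 1 - m) else 0

lemma uS_apply_pos {i j : ℤ} (hi : 0 ≤ i) (hj : 0 ≤ j) :
    uS 𝓕 i j = ∑ m ∈ Finset.Icc (i + 1) (i + j + 1), 𝓕.Fzi m (i + j + 1 - m) := by
  simp only [uS, if_pos (And.intro hi hj)]

lemma uS_apply_neg {i j : ℤ} (hij : ¬(0 ≤ i ∧ 0 ≤ j)) : uS 𝓕 i j = 0 := by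
  simp only [uS, if_neg hij]

lemma uS_zero_zero : uS 𝓕 0 0 = 1 := by
  rw [uS_apply_pos 𝓕 le_rfl le_rfl]
  norm_num
  rw [show 𝓕.Fzi 1 0 = if (1 : ℤ) = 1 then 1 else 0 from Fzi_zero_right 𝓕 1]
  norm_num

lemma uS_supp {i j : ℤ} (h : uS 𝓕 i j ≠ 0) : 0 ≤ i ∧ 0 ≤ j := by
  by_contra hc
  exact h (uS_apply_neg 𝓕 hc)

lemma uS_inCone : InCone 0 0 (uS 𝓕) := fun i j h => by
  have := uS_supp 𝓕 h
  omega

lemma uS_sub_one_supp {i j : ℤ} (h : uS 𝓕 i j - oneS2 R i j ≠ 0) :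
    0 ≤ i ∧ 0 ≤ j ∧ 1 ≤ i + j := by
  have h1 : 0 ≤ i ∧ 0 ≤ j := by
    by_contra hc
    apply h
    rw [uS_apply_neg 𝓕 hc, oneS2_eq_zero (by omega), sub_zero]
  refine ⟨h1.1, h1.2, ?_⟩
  by_contra hc
  have hi : i = 0 := by omega
  have hj : j = 0 := by omega
  subst hi; subst hj
  apply h
  rw [uS_zero_zero]
  simp [oneS2]

lemma uS_sub_one_inCone : InCone 0 1 (fun i j => uS 𝓕 i j - oneS2 R i j) := fun i j h => by
  have := uS_sub_one_supp 𝓕 h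
  omega

lemma zmw_mul (f : ℤ → ℤ → R) : mulS2 (zmw R) f = fun a b => f (a - 1) b - f a (b - 1) := by
  funext a b
  rw [mulS2_apply]
  rw [finsum_eq_sum_of_support_subset _
    (s := ({((1 : ℤ), (0 : ℤ)), ((0 : ℤ), (1 : ℤ))} : Finset (ℤ × ℤ))) ?_]
  · rw [Finset.sum_pair (by decide)]
    have e1 : zmw R 1 0 = 1 := by norm_num [zmw]
    have e2 : zmw R 0 1 = -1 := by norm_num [zmw]
    rw [e1, e2, show b - 0 = b by ring, show a - 0 = a by ring]
    ring
  · rintro ⟨i, j⟩ hp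
    simp only [mem_support] at hp
    have : zmw R i j ≠ 0 := fun hq => hp (by simp [hq])
    simp only [zmw] at this
    split_ifs at this with h1 h2
    · simp [h1.1, h1.2]
    · simp [h2.1, h2.2]
    · exact absurd rfl this

lemma zmw_inCone : InCone 0 1 (zmw R) := by
  intro i j h
  simp only [zmw] at h
  split_ifs at h with h1 h2
  · omega
  · omega
  · exact absurd rfl h

lemma Icc_split (l u : ℤ) (h : l ≤ u) :
    Finset.Icc l u = insert l (Finset.Icc (l + 1) u) := by
  ext x
  simp only [Finset.mem_Icc, Finset.mem_insert]
  omega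

lemma not_mem_Icc_succ (l u : ℤ) : l ∉ Finset.Icc (l + 1) u := by
  simp only [Finset.mem_Icc]
  omega

lemma Fzi_diag_finset {n : ℤ} (hn : 0 ≤ n) :
    ∑ m ∈ Finset.Icc (0 : ℤ) n, 𝓕.Fzi m (n - m) = 0 := by
  have h0 := Fzi_diag 𝓕 n
  rw [finsum_eq_sum_of_support_subset _ (s := Finset.Icc (0 : ℤ) n) ?_] at h0
  · exact h0
  · intro m hm
    simp only [mem_support] at hm
    have := Fzi_supp 𝓕 hm
    simp only [Finset.coe_Icc, Set.mem_Icc]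
    omega

lemma zmw_mul_u : mulS2 (zmw R) (uS 𝓕) = 𝓕.Fzi := by
  rw [zmw_mul]
  funext a b
  show uS 𝓕 (a - 1) b - uS 𝓕 a (b - 1) = 𝓕.Fzi a b
  rcases lt_trichotomy a 0 with ha | ha | ha
  · rw [uS_apply_neg 𝓕 (by omega), uS_apply_neg 𝓕 (by omega),
      Fzi_eq_zero 𝓕 (by omega), sub_zero]
  · subst ha
    rw [uS_apply_neg 𝓕 (by omega), zero_sub]
    rcases le_or_gt b 0 with hb | hb
    · rw [uS_apply_neg 𝓕 (by omega), Fzi_eq_zero 𝓕 (by omega), neg_zero]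
    · rw [uS_apply_pos 𝓕 le_rfl (by omega)]
      have hd := Fzi_diag_finset 𝓕 (le_of_lt hb)
      rw [Icc_split 0 b (by omega), Finset.sum_insert (not_mem_Icc_succ 0 b)] at hd
      rw [show (0 : ℤ) + 1 = 1 by ring] at hd
      rw [show b - (0 : ℤ) = b by ring] at hd
      rw [show (0 : ℤ) + 1 = 1 by ring, show (0 : ℤ) + (b - 1) + 1 = b by ring]
      linear_combination -hd
  · rcases lt_trichotomy b 0 with hb | hb | hb
    · rw [uS_apply_neg 𝓕 (by omega), uS_apply_neg 𝓕 (by omega),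
        Fzi_eq_zero 𝓕 (by omega), sub_zero]
    · subst hb
      rw [show (0:ℤ) - 1 = -1 by ring, uS_apply_neg 𝓕 (i := a) (j := -1) (by omega), sub_zero,
        uS_apply_pos 𝓕 (by omega) le_rfl,
        show a - 1 + 1 = a by ring, show a - 1 + 0 + 1 = a by ring,
        Finset.Icc_self, Finset.sum_singleton, show a - a = (0 : ℤ) by ring]
    · rw [uS_apply_pos 𝓕 (by omega) (by omega), uS_apply_pos 𝓕 (by omega) (by omega)]
      rw [show a - 1 + 1 = a by ring, show a - 1 + b + 1 = a + b by ring,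
        show a + (b - 1) + 1 = a + b by ring]
      rw [Icc_split a (a + b) (by omega), Finset.sum_insert (not_mem_Icc_succ a (a + b))]
      rw [show a + b - a = b by ring]
      ring

/-- inverse of `u`. -/
noncomputable def US : ℤ → ℤ → R := geomS (fun i j => uS 𝓕 i j - oneS2 R i j)

lemma u_mul_US : mulS2 (uS 𝓕) (US 𝓕) = oneS2 R := by
  have : uS 𝓕 = fun i j => oneS2 R i j + (uS 𝓕 i j - oneS2 R i j) := by
    funext i j; ring
  rw [show mulS2 (uS 𝓕) (US 𝓕)
      = mulS2 (fun i j => oneS2 R i j + (uS 𝓕 i j - oneS2 R i j)) (US 𝓕) by rw [← this]]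
  exact mulS2_one_add_geomS (s := 1) (t := 1) (uS_sub_one_inCone 𝓕) le_rfl (by norm_num)
    (fun i j h => by have := uS_sub_one_supp 𝓕 h; omega)

lemma pow2_quadrant {f : ℤ → ℤ → R} (hf : ∀ i j, f i j ≠ 0 → 0 ≤ i ∧ 0 ≤ j) :
    ∀ (k : ℕ) (a b : ℤ), pow2 f k a b ≠ 0 → 0 ≤ a ∧ 0 ≤ b := by
  intro k
  induction k with
  | zero =>
    intro a b h
    have : a = 0 ∧ b = 0 := by
      by_contra hc
      exact h (oneS2_eq_zero hc)
    omega
  | succ k ih =>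
    intro a b h
    rw [pow2_succ, mulS2_apply] at h
    obtain ⟨⟨i, j⟩, hp⟩ := exists_ne_zero_of_finsum_ne_zero h
    have h1 : f i j ≠ 0 := fun hq => hp (by simp [hq])
    have h2 : pow2 f k (a - i) (b - j) ≠ 0 := fun hq => hp (by simp [hq])
    have := hf i j h1
    have := ih _ _ h2
    omega

lemma US_supp {i j : ℤ} (h : US 𝓕 i j ≠ 0) : 0 ≤ i ∧ 0 ≤ j := by
  obtain ⟨k, hk⟩ := exists_ne_zero_of_finsum_ne_zero h
  have h2 : pow2 (fun i j => uS 𝓕 i j - oneS2 R i j) k i j ≠ 0 := fun hq => hk (by simp [hq])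
  exact pow2_quadrant (fun i j h => by have := uS_sub_one_supp 𝓕 h; omega) k i j h2

lemma US_inCone : InCone 0 0 (US 𝓕) := fun i j h => by
  have := US_supp 𝓕 h
  omega

/-- `i_{z,w} (z-w)^{-1}`. -/
def ES : ℤ → ℤ → R := fun a b => if 0 ≤ b ∧ a + b = -1 then 1 else 0

lemma ES_inCone : InCone 0 (-1) (ES (R := R)) := by
  intro i j h
  have : 0 ≤ j ∧ i + j = -1 := by
    by_contra hc
    exact h (if_neg hc)
  omega

lemma zmw_mul_ES : mulS2 (zmw R) (ES (R := R)) = oneS2 R := by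
  rw [zmw_mul]
  funext a b
  show ES (a - 1) b - ES a (b - 1) = oneS2 R a b
  simp only [ES, oneS2]
  split_ifs <;> first | ring1 | (exfalso; omega)

lemma X_eq : izwPow 𝓕.Fzi (-1) = mulS2 (US 𝓕) (ES (R := R)) := by
  apply mulS2_inv_unique (X_inCone 𝓕) ((US_inCone 𝓕).mulS2 ES_inCone) (Fzi_inCone 𝓕)
  · rw [mulS2_comm]
    exact GX_one 𝓕
  · rw [← zmw_mul_u 𝓕,
      mul4_shuffle (US_inCone 𝓕) ES_inCone zmw_inCone (uS_inCone 𝓕)]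
    rw [show mulS2 (ES (R := R)) (zmw R) = oneS2 R from by rw [mulS2_comm]; exact zmw_mul_ES,
      mulS2_one_right, mulS2_comm, u_mul_US 𝓕]

end Main

end DeltaAux
namespace DeltaAux

open Function

section Main2

variable {R : Type*} [CommRing R] (𝓕 : FormalGroupLaw R)

/-- transpose of `hwNegS Fzi`. -/
noncomputable def HS : ℤ → ℤ → R := trS (hwNegS 𝓕.Fzi)

lemma HS_supp {i j : ℤ} (h : HS 𝓕 i j ≠ 0) : 0 ≤ j ∧ 0 ≤ i + j ∧ 1 ≤ i + 2 * j := by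
  have := hwNegS_supp 𝓕 (h : hwNegS 𝓕.Fzi j i ≠ 0)
  omega

lemma HS_inCone : InCone 0 0 (HS 𝓕) := fun i j h => by
  have := HS_supp 𝓕 h
  omega

lemma HS_strict : ∀ i j : ℤ, HS 𝓕 i j ≠ 0 → 1 ≤ 1 * i + 2 * j := by
  intro i j h
  have := HS_supp 𝓕 h
  omega

lemma oneS2_swap (a b : ℤ) : oneS2 R a b = oneS2 R b a := by
  simp only [oneS2]
  by_cases h : a = 0 <;> by_cases h' : b = 0 <;> simp [h, h']

lemma trG_decomp : trS 𝓕.Fzi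
    = fun a b => -(shz 1 (fun i j => oneS2 R i j + HS 𝓕 i j) a b) := by
  funext a b
  show 𝓕.Fzi b a = -(oneS2 R (a - 1) b + HS 𝓕 (a - 1) b)
  have h1 : HS 𝓕 (a - 1) b = -𝓕.Fzi b (a - 1 + 1) - oneS2 R b (a - 1) := rfl
  rw [h1, show a - 1 + 1 = a by ring, oneS2_swap b (a - 1)]
  ring

lemma iwz_eq_neg : trS (iwzPowNeg 𝓕.Fzi (-1))
    = fun a b => -(shz (-1) (geomS (HS 𝓕)) a b) := by
  funext a b
  show (msign (-1) : R) * ∑ᶠ k : ℕ, (zbinom (-1) k : R) * pow2 (hwNegS 𝓕.Fzi) k b (a - (-1))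
    = -(geomS (HS 𝓕) (a - (-1)) b)
  rw [msign_neg_one]
  push_cast
  rw [neg_one_mul]
  congr 1
  apply finsum_congr
  intro k
  rw [zbinom_neg_one]
  push_cast
  congr 1
  rw [show HS 𝓕 = trS (hwNegS 𝓕.Fzi) from rfl, ← trS_pow2]
  rfl

lemma X'_mul_trG : mulS2 (trS (iwzPowNeg 𝓕.Fzi (-1))) (trS 𝓕.Fzi) = oneS2 R := by
  rw [iwz_eq_neg, trG_decomp, mulS2_neg_neg, mulS2_comm, mulS2_shz_cancel]
  exact mulS2_one_add_geomS (HS_inCone 𝓕) le_rfl le_rfl (HS_strict 𝓕)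

lemma X'_inCone : InCone 0 (-1) (trS (iwzPowNeg 𝓕.Fzi (-1))) := by
  intro a b h
  rw [congrFun (congrFun (iwz_eq_neg 𝓕) a) b] at h
  have h2 : geomS (HS 𝓕) (a - -1) b ≠ 0 := fun hq => h (by simp only [shz]; rw [hq, neg_zero])
  have := geomS_inCone (HS_inCone 𝓕) le_rfl le_rfl (a - -1) b h2
  omega

lemma trG_inCone : InCone 0 1 (trS 𝓕.Fzi) := fun i j h => by
  have := Fzi_supp 𝓕 (h : 𝓕.Fzi j i ≠ 0)
  omega

lemma trS_zmw : trS (zmw R) = fun i j => -zmw R i j := by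
  funext a b
  show zmw R b a = -zmw R a b
  simp only [zmw]
  split_ifs <;> first | ring1 | (exfalso; omega)

lemma trS_US_inCone : InCone 0 0 (trS (US 𝓕)) := fun i j h => by
  have := US_supp 𝓕 (h : US 𝓕 j i ≠ 0)
  omega

lemma trS_uS_inCone : InCone 0 0 (trS (uS 𝓕)) := fun i j h => by
  have := uS_supp 𝓕 (h : uS 𝓕 j i ≠ 0)
  omega

lemma negES_inCone : InCone 0 (-1) (fun a b => -(ES (R := R) a b)) := by
  intro i j h
  have h2 : ES (R := R) i j ≠ 0 := fun hq => h (by simp [hq])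
  exact ES_inCone i j h2

lemma Y'_mul_trG :
    mulS2 (mulS2 (trS (US 𝓕)) (fun a b => -(ES (R := R) a b))) (trS 𝓕.Fzi) = oneS2 R := by
  have htrG : trS 𝓕.Fzi = fun a b => -(mulS2 (zmw R) (trS (uS 𝓕)) a b) :=
    calc trS 𝓕.Fzi = trS (mulS2 (zmw R) (uS 𝓕)) := by rw [zmw_mul_u]
      _ = mulS2 (trS (zmw R)) (trS (uS 𝓕)) := trS_mulS2 _ _
      _ = mulS2 (fun i j => -zmw R i j) (trS (uS 𝓕)) := by rw [trS_zmw]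
      _ = fun a b => -(mulS2 (zmw R) (trS (uS 𝓕)) a b) := mulS2_neg_left _ _
  rw [mulS2_neg_right (trS (US 𝓕)) (ES (R := R)), htrG, mulS2_neg_neg,
    mul4_shuffle (trS_US_inCone 𝓕) ES_inCone zmw_inCone (trS_uS_inCone 𝓕),
    ← trS_mulS2,
    show mulS2 (US 𝓕) (uS 𝓕) = oneS2 R from by rw [mulS2_comm]; exact u_mul_US 𝓕,
    trS_oneS2,
    show mulS2 (ES (R := R)) (zmw R) = oneS2 R from by rw [mulS2_comm]; exact zmw_mul_ES,
    mulS2_one]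

lemma iwz_eq : iwzPowNeg 𝓕.Fzi (-1)
    = mulS2 (US 𝓕) (fun a b => -(ES (R := R) b a)) := by
  have huniq : trS (iwzPowNeg 𝓕.Fzi (-1))
      = mulS2 (trS (US 𝓕)) (fun a b => -(ES (R := R) a b)) :=
    mulS2_inv_unique (X'_inCone 𝓕)
      ((trS_US_inCone 𝓕).mulS2 (negES_inCone (R := R))) (trG_inCone 𝓕)
      (X'_mul_trG 𝓕) (Y'_mul_trG 𝓕)
  have h2 := congrArg trS huniq
  rw [trS_trS, trS_mulS2, trS_trS] at h2
  rw [h2]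
  rfl

/-- the diagonal series such that `delta a b = DD (a + b)`. -/
noncomputable def DD : ℤ → R := fun n => ∑ᶠ i : ℤ, US 𝓕 i (n + 1 - i)

lemma DD_eq_zero {n : ℤ} (hn : n < -1) : DD 𝓕 n = 0 := by
  apply finsum_eq_zero_of_forall_eq_zero
  intro i
  by_contra hc
  have := US_supp 𝓕 hc
  omega

lemma delta_eq (a b : ℤ) : 𝓕.delta a b = DD 𝓕 (a + b) := by
  have h1 : 𝓕.delta a b = mulS2 (US 𝓕) (ES (R := R)) a b
      - mulS2 (US 𝓕) (fun x y => -(ES (R := R) y x)) a b := by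
    show izwPow 𝓕.Fzi (-1) a b - iwzPowNeg 𝓕.Fzi (-1) a b = _
    rw [X_eq 𝓕, iwz_eq 𝓕]
  rw [h1, mulS2_apply, mulS2_apply]
  have hfin1 := support_cone_finite (US_inCone 𝓕) ES_inCone a b
  have hfin2 : (support fun p : ℤ × ℤ =>
      US 𝓕 p.1 p.2 * -(ES (R := R) (b - p.2) (a - p.1))).Finite := by
    apply Set.Finite.subset
      ((Set.finite_Icc (0 : ℤ) a).prod (Set.finite_Icc (0 : ℤ) (a + b + 1)))
    rintro ⟨i, j⟩ hp
    simp only [mem_support] at hp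
    have q1 : US 𝓕 i j ≠ 0 := fun hq => hp (by simp [hq])
    have q2 : ES (R := R) (b - j) (a - i) ≠ 0 := fun hq => hp (by simp [hq])
    have q3 := US_supp 𝓕 q1
    have q4 : 0 ≤ a - i ∧ (b - j) + (a - i) = -1 := by
      by_contra hc
      exact q2 (if_neg hc)
    simp only [Set.mem_prod, Set.mem_Icc]
    omega
  rw [← finsum_sub_distrib hfin1 hfin2]
  have hstep : ∀ p : ℤ × ℤ, US 𝓕 p.1 p.2 * ES (R := R) (a - p.1) (b - p.2)
      - US 𝓕 p.1 p.2 * -(ES (R := R) (b - p.2) (a - p.1))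
      = US 𝓕 p.1 p.2 * (if (a - p.1) + (b - p.2) = -1 then (1 : R) else 0) := by
    rintro ⟨i, j⟩
    have hE : ES (R := R) (a - i) (b - j) + ES (R := R) (b - j) (a - i)
        = if (a - i) + (b - j) = -1 then (1 : R) else 0 := by
      simp only [ES]
      split_ifs <;> first | ring1 | (exfalso; omega)
    calc US 𝓕 i j * ES (R := R) (a - i) (b - j)
        - US 𝓕 i j * -(ES (R := R) (b - j) (a - i))
        = US 𝓕 i j * (ES (R := R) (a - i) (b - j) + ES (R := R) (b - j) (a - i)) := by ring
      _ = _ := by rw [hE]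
  rw [finsum_congr hstep]
  have hfin3 : (support fun p : ℤ × ℤ =>
      US 𝓕 p.1 p.2 * (if (a - p.1) + (b - p.2) = -1 then (1 : R) else 0)).Finite := by
    apply Set.Finite.subset
      ((Set.finite_Icc (0 : ℤ) (a + b + 1)).prod (Set.finite_Icc (0 : ℤ) (a + b + 1)))
    rintro ⟨i, j⟩ hp
    simp only [mem_support] at hp
    have q1 : US 𝓕 i j ≠ 0 := fun hq => hp (by simp [hq])
    have q2 : (a - i) + (b - j) = -1 := by
      by_contra hc
      exact hp (by rw [if_neg hc, mul_zero])
    have q3 := US_supp 𝓕 q1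
    simp only [Set.mem_prod, Set.mem_Icc]
    omega
  rw [finsum_curry _ hfin3]
  have hinner : ∀ i : ℤ,
      (∑ᶠ j : ℤ, US 𝓕 i j * (if (a - i) + (b - j) = -1 then (1 : R) else 0))
      = US 𝓕 i (a + b + 1 - i) := by
    intro i
    rw [finsum_eq_single _ (a + b + 1 - i)]
    · rw [if_pos (by omega), mul_one]
    · intro j hj
      rw [if_neg (by omega), mul_zero]
  rw [finsum_congr hinner]
  rfl

lemma finsum_group {M : Type*} [AddCommMonoid M] (F : ℤ × ℤ → M)
    (hF : (support F).Finite) :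
    ∑ᶠ p : ℤ × ℤ, F p = ∑ᶠ j : ℤ, ∑ᶠ i : ℤ, F (i, j - i) := by
  have hbij : Bijective (fun q : ℤ × ℤ => ((q.2, q.1 - q.2) : ℤ × ℤ)) := by
    constructor
    · rintro ⟨a, b⟩ ⟨c, d⟩ h
      simp only [Prod.mk.injEq] at h ⊢
      omega
    · rintro ⟨i, j⟩
      refine ⟨(i + j, i), ?_⟩
      simp
  have h1 : ∑ᶠ q : ℤ × ℤ, F (q.2, q.1 - q.2) = ∑ᶠ p, F p :=
    finsum_eq_of_bijective _ hbij fun q => rfl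
  have hfin : (support fun q : ℤ × ℤ => F (q.2, q.1 - q.2)).Finite := by
    have heq : (support fun q : ℤ × ℤ => F (q.2, q.1 - q.2))
        = (fun q : ℤ × ℤ => ((q.2, q.1 - q.2) : ℤ × ℤ)) ⁻¹' (support F) := rfl
    rw [heq]
    exact hF.preimage hbij.1.injOn
  rw [← h1, finsum_curry _ hfin]

end Main2

end DeltaAux
/-- the `F`-delta distribution is supported on the diagonal:
for `f ∈ R((z))` the products `z⁻¹δ_F(w/z)·f(z)` and `z⁻¹δ_F(w/z)·f(w)` converge and agree,
and for `f(z,w) ∈ R((z,w))` the products `z⁻¹δ_F(w/z)·f(z,w)` and `z⁻¹δ_F(w/z)·f(w,w)`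
converge and agree, where `f(w,w)` is the diagonal series. -/
theorem deltaF_diagonal_support (R : Type*) [CommRing R] (𝓕 : FormalGroupLaw R) :
    (∀ f : ℤ → R, IsLaurent f →
      (∀ a b : ℤ, (Function.support fun i : ℤ => f i * 𝓕.delta (a - i) b).Finite) ∧
      (∀ a b : ℤ, (Function.support fun i : ℤ => f i * 𝓕.delta a (b - i)).Finite) ∧
      (∀ a b : ℤ, (∑ᶠ i : ℤ, f i * 𝓕.delta (a - i) b) = ∑ᶠ i : ℤ, f i * 𝓕.delta a (b - i))) ∧
    (∀ f : ℤ → ℤ → R, IsLaurent2 f →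
      (∀ a b : ℤ,
        (Function.support fun p : ℤ × ℤ => f p.1 p.2 * 𝓕.delta (a - p.1) (b - p.2)).Finite) ∧
      (∀ n : ℤ, (Function.support fun i : ℤ => f i (n - i)).Finite) ∧
      (∀ a b : ℤ,
        (Function.support fun j : ℤ => (∑ᶠ i : ℤ, f i (j - i)) * 𝓕.delta a (b - j)).Finite) ∧
      (∀ a b : ℤ, (∑ᶠ p : ℤ × ℤ, f p.1 p.2 * 𝓕.delta (a - p.1) (b - p.2))
        = ∑ᶠ j : ℤ, (∑ᶠ i : ℤ, f i (j - i)) * 𝓕.delta a (b - j))) := by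
  have hdelta_ne : ∀ x y : ℤ, 𝓕.delta x y ≠ 0 → -1 ≤ x + y := by
    intro x y h
    by_contra hc
    exact h (by rw [DeltaAux.delta_eq 𝓕 x y]; exact DeltaAux.DD_eq_zero 𝓕 (by omega))
  constructor
  · intro f hf
    obtain ⟨N, hN⟩ := hf
    refine ⟨?_, ?_, ?_⟩
    · intro a b
      apply Set.Finite.subset (Set.finite_Icc N (a + b + 1))
      intro i hi
      simp only [Function.mem_support] at hi
      have h1 : f i ≠ 0 := fun h => hi (by simp [h])
      have h2 : 𝓕.delta (a - i) b ≠ 0 := fun h => hi (by simp [h])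
      have h3 : ¬ i < N := fun hc => h1 (hN i hc)
      have h4 := hdelta_ne _ _ h2
      simp only [Set.mem_Icc]
      omega
    · intro a b
      apply Set.Finite.subset (Set.finite_Icc N (a + b + 1))
      intro i hi
      simp only [Function.mem_support] at hi
      have h1 : f i ≠ 0 := fun h => hi (by simp [h])
      have h2 : 𝓕.delta a (b - i) ≠ 0 := fun h => hi (by simp [h])
      have h3 : ¬ i < N := fun hc => h1 (hN i hc)
      have h4 := hdelta_ne _ _ h2
      simp only [Set.mem_Icc]
      omega
    · intro a b
      apply finsum_congr
      intro i
      rw [DeltaAux.delta_eq 𝓕, DeltaAux.delta_eq 𝓕]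
      congr 2
      omega
  · intro f hf
    have hbadfin : {p : ℤ × ℤ | (p.1 < 0 ∨ p.2 < 0) ∧ f p.1 p.2 ≠ 0}.Finite := hf
    have part1 : ∀ a b : ℤ,
        (Function.support fun p : ℤ × ℤ => f p.1 p.2 * 𝓕.delta (a - p.1) (b - p.2)).Finite := by
      intro a b
      apply Set.Finite.subset (hbadfin.union
        ((Set.finite_Icc (0 : ℤ) (a + b + 1)).prod (Set.finite_Icc (0 : ℤ) (a + b + 1))))
      rintro ⟨i, j⟩ hp
      simp only [Function.mem_support] at hp
      have h1 : f i j ≠ 0 := fun h => hp (by simp [h])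
      have h2 : 𝓕.delta (a - i) (b - j) ≠ 0 := fun h => hp (by simp [h])
      have h4 := hdelta_ne _ _ h2
      by_cases hneg : i < 0 ∨ j < 0
      · exact Set.mem_union_left _ ⟨hneg, h1⟩
      · apply Set.mem_union_right
        simp only [Set.mem_prod, Set.mem_Icc]
        omega
    have part2 : ∀ n : ℤ, (Function.support fun i : ℤ => f i (n - i)).Finite := by
      intro n
      apply Set.Finite.subset ((hbadfin.image Prod.fst).union (Set.finite_Icc (0 : ℤ) n))
      intro i hi
      simp only [Function.mem_support] at hi
      by_cases hneg : i < 0 ∨ n - i < 0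
      · exact Set.mem_union_left _ ⟨(i, n - i), ⟨hneg, hi⟩, rfl⟩
      · apply Set.mem_union_right
        simp only [Set.mem_Icc]
        omega
    refine ⟨part1, part2, ?_, ?_⟩
    · intro a b
      apply Set.Finite.subset ((hbadfin.image fun p => p.1 + p.2).union
        (Set.finite_Icc (0 : ℤ) (a + b + 1)))
      intro j hj
      simp only [Function.mem_support] at hj
      have h1 : (∑ᶠ i : ℤ, f i (j - i)) ≠ 0 := fun h => hj (by simp [h])
      have h2 : 𝓕.delta a (b - j) ≠ 0 := fun h => hj (by simp [h])
      have h4 := hdelta_ne _ _ h2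
      obtain ⟨i, hi⟩ := DeltaAux.exists_ne_zero_of_finsum_ne_zero h1
      by_cases hneg : i < 0 ∨ j - i < 0
      · exact Set.mem_union_left _ ⟨(i, j - i), ⟨hneg, hi⟩, by simp⟩
      · apply Set.mem_union_right
        simp only [Set.mem_Icc]
        omega
    · intro a b
      rw [DeltaAux.finsum_group _ (part1 a b)]
      apply finsum_congr
      intro j
      rw [finsum_mul' _ _ (part2 j)]
      apply finsum_congr
      intro i
      congr 1
      rw [DeltaAux.delta_eq 𝓕, DeltaAux.delta_eq 𝓕]
      congr 1
      omega
end

section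
/- Let R be a commutative ring and let f = Σ_{i,j,k∈ℤ} a_{i,j,k} x0^i x1^j x2^k be a bilateral series in three variables such that the three substituted expansions below converge (every coefficient is a finite sum): i_{x1,x2} f(x1−x2, x1, x2) := Σ_{i,j,k} a_{i,j,k}·(i_{x1,x2}(x1−x2)^i)·x1^j x2^k with i_{x1,x2}(x1−x2)^i = Σ_{m≥0} C(i,m)(−1)^m x1^{i−m} x2^m; i_{x2,x1} f(x1−x2, x1, x2) defined analogously with i_{x2,x1}(x1−x2)^i = Σ_{m≥0} C(i,m)(−x2)^{i−m} x1^m; and i_{x1,x0} f(x0, x1, x1−x0) := Σ_{i,j,k} a_{i,j,k}·x0^i x1^j·(i_{x1,x0}(x1−x0)^k) with i_{x1,x0}(x1−x0)^k = Σ_{m≥0} C(k,m)(−1)^m x1^{k−m} x0^m. Then Res_{x1=0}Res_{x2=0} i_{x1,x2} f(x1−x2,x1,x2) dx2 dx1 − Res_{x2=0}Res_{x1=0} i_{x2,x1} f(x1−x2,x1,x2) dx1 dx2 = Res_{x1=0}Res_{x0=0} i_{x1,x0} f(x0,x1,x1−x0) dx0 dx1, where the iterated residue extracts the coefficient of the (−1)-st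 power of each indicated variable. -/
/-!
Coefficient-wise formal calculus for vertex `F`-algebras, following
M. Upmeier, "Vertex F-Algebras and Their Associated Lie Algebra".

Series in one, two or three variables are represented by their coefficient
functions `ℤ → R`, `ℤ → ℤ → R`, …; products are given by coefficient-wise
(finite) sums, expressed via `finsum` (`∑ᶠ`).
-/

open scoped BigOperators

private lemma msign_toNat' (n : ℤ) (h : 0 ≤ n) : msign n = (-1) ^ n.toNat := by
  unfold msign
  rcases Nat.even_or_odd n.toNat with he | ho
  · rw [if_pos, Even.neg_one_pow he]
    rw [← Int.toNat_of_nonneg h]; exact_mod_cast he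
  · rw [if_neg, Odd.neg_one_pow ho]
    rw [← Int.toNat_of_nonneg h]
    simpa using (Int.odd_coe_nat n.toNat).mpr ho

private lemma msign_neg_one_sub' (p q : ℤ) :
    msign (-1 - p - q) = -(msign p * msign q) := by
  unfold msign
  simp only [Int.even_iff]
  split_ifs with hh1 hh2 hh3 <;> omega

private lemma neg_one_pow_sq (m : ℕ) : ((-1 : ℤ)) ^ m * (-1) ^ m = 1 := by
  rw [← pow_add]
  exact Even.neg_one_pow ⟨m, rfl⟩

private lemma key' (p q : ℤ) :
    zbinomZ (p + q) q * msign q - zbinomZ (p + q) p * msign q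
      = zbinomZ (-1 - q) (-1 - p - q) * msign (-1 - p - q) := by
  rcases le_or_gt 0 (p + q) with hi | hi
  · have hr : zbinomZ (-1 - q) (-1 - p - q) = 0 := by
      unfold zbinomZ; rw [if_pos (by omega)]
    rw [hr, zero_mul]
    have hpq : zbinomZ (p + q) q = zbinomZ (p + q) p := by
      unfold zbinomZ zbinom
      rcases lt_or_ge q 0 with hq | hq
      · rcases lt_or_ge p 0 with hp | hp
        · omega
        · rw [if_pos hq, if_neg (by omega : ¬ p < 0), if_pos hi,
            Nat.choose_eq_zero_of_lt (by omega)]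
          simp
      · rcases lt_or_ge p 0 with hp | hp
        · rw [if_neg (by omega : ¬ q < 0), if_pos hp, if_pos hi,
            Nat.choose_eq_zero_of_lt (by omega)]
          simp
        · rw [if_neg (by omega : ¬ q < 0), if_neg (by omega : ¬ p < 0),
            if_pos hi, if_pos hi]
          have hle : q.toNat ≤ (p + q).toNat := by omega
          have hsm := Nat.choose_symm hle
          rw [show (p + q).toNat - q.toNat = p.toNat by omega] at hsm
          rw [← hsm]
    rw [hpq, sub_self]
  · rcases lt_or_ge q 0 with hq | hq
    · rcases lt_or_ge p 0 with hp | hp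
      · have h1 : zbinomZ (p + q) q = 0 := by unfold zbinomZ; rw [if_pos hq]
        have h2 : zbinomZ (p + q) p = 0 := by unfold zbinomZ; rw [if_pos hp]
        have h3 : zbinomZ (-1 - q) (-1 - p - q) = 0 := by
          unfold zbinomZ zbinom
          rw [if_neg (by omega : ¬ (-1 - p - q) < 0),
            if_pos (by omega : (0:ℤ) ≤ -1 - q),
            Nat.choose_eq_zero_of_lt (by omega)]
          simp
        rw [h1, h2, h3]; ring
      · -- p ≥ 0, q < 0
        have h1 : zbinomZ (p + q) q = 0 := by unfold zbinomZ; rw [if_pos hq]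
        have h2 : zbinomZ (p + q) p
            = (-1) ^ p.toNat * (((-1 - q).toNat).choose p.toNat : ℤ) := by
          unfold zbinomZ zbinom
          rw [if_neg (by omega : ¬ p < 0), if_neg (by omega : ¬ (0:ℤ) ≤ p + q)]
          congr 3
          omega
        have h3 : zbinomZ (-1 - q) (-1 - p - q)
            = (((-1 - q).toNat).choose ((-1 - p - q).toNat) : ℤ) := by
          unfold zbinomZ zbinom
          rw [if_neg (by omega : ¬ (-1 - p - q) < 0),
            if_pos (by omega : (0:ℤ) ≤ -1 - q)]
        have hsymm : ((-1 - q).toNat).choose ((-1 - p - q).toNat)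
            = ((-1 - q).toNat).choose p.toNat := by
          have hle : p.toNat ≤ (-1 - q).toNat := by omega
          have hsm := Nat.choose_symm hle
          rwa [show (-1 - q).toNat - p.toNat = (-1 - p - q).toNat by omega] at hsm
        rw [h1, h2, h3, hsymm, zero_mul, zero_sub,
          msign_neg_one_sub' p q, msign_toNat' p (by omega)]
        ring
    · -- q ≥ 0, hence p < 0
      have hp : p < 0 := by omega
      have h2 : zbinomZ (p + q) p = 0 := by unfold zbinomZ; rw [if_pos hp]
      have h1 : zbinomZ (p + q) q
          = (-1) ^ q.toNat * (((-1 - p).toNat).choose q.toNat : ℤ) := by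
        unfold zbinomZ zbinom
        rw [if_neg (by omega : ¬ q < 0), if_neg (by omega : ¬ (0:ℤ) ≤ p + q)]
        congr 3
        omega
      have h3 : zbinomZ (-1 - q) (-1 - p - q)
          = (-1) ^ ((-1 - p - q).toNat)
            * (((-1 - p).toNat).choose ((-1 - p - q).toNat) : ℤ) := by
        unfold zbinomZ zbinom
        rw [if_neg (by omega : ¬ (-1 - p - q) < 0),
          if_neg (by omega : ¬ (0:ℤ) ≤ -1 - q)]
        congr 3
        omega
      have hsymm : ((-1 - p).toNat).choose ((-1 - p - q).toNat)
          = ((-1 - p).toNat).choose q.toNat := by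
        have hle : q.toNat ≤ (-1 - p).toNat := by omega
        have hsm := Nat.choose_symm hle
        rwa [show (-1 - p).toNat - q.toNat = (-1 - p - q).toNat by omega] at hsm
      rw [h1, h2, h3, hsymm, zero_mul, sub_zero,
        msign_toNat' q hq, msign_toNat' (-1 - p - q) (by omega)]
      calc (-1 : ℤ) ^ q.toNat * (((-1 - p).toNat).choose q.toNat : ℤ) * (-1) ^ q.toNat
          = ((-1 : ℤ) ^ q.toNat * (-1) ^ q.toNat)
            * (((-1 - p).toNat).choose q.toNat : ℤ) := by ring
        _ = (((-1 - p).toNat).choose q.toNat : ℤ) := by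
            rw [neg_one_pow_sq]; ring
        _ = (-1 : ℤ) ^ ((-1 - p - q).toNat)
            * (((-1 - p).toNat).choose q.toNat : ℤ)
            * (-1) ^ ((-1 - p - q).toNat) := by
            rw [show ∀ x : ℤ, (-1 : ℤ) ^ ((-1 - p - q).toNat) * x
                * (-1) ^ ((-1 - p - q).toNat)
                = ((-1 : ℤ) ^ ((-1 - p - q).toNat)
                  * (-1) ^ ((-1 - p - q).toNat)) * x from fun x => by ring,
              neg_one_pow_sq, one_mul]

private def flipEquiv : ℤ × ℤ ≃ ℤ × ℤ where
  toFun t := (-2 - t.1 - t.2, t.1)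
  invFun s := (s.2, -2 - s.1 - s.2)
  left_inv t := by
    refine Prod.ext rfl ?_
    show -2 - (-2 - t.1 - t.2) - t.1 = t.2
    ring
  right_inv s := by
    refine Prod.ext ?_ rfl
    show -2 - s.2 - (-2 - s.1 - s.2) = s.1
    ring

private lemma key2 (j k : ℤ) :
    zbinomZ (-2 - j - k) (-1 - k) * msign (-1 - k)
      - zbinomZ (-2 - j - k) (-1 - j) * msign (-1 - k)
      = zbinomZ k (1 + j + k) * msign (1 + j + k) := by
  have h := key' (-1 - j) (-1 - k)
  rw [show (-1 - j) + (-1 - k) = -2 - j - k by ring,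
    show (-1 : ℤ) - (-1 - k) = k by ring,
    show (-1 : ℤ) - (-1 - j) - (-1 - k) = 1 + j + k by ring] at h
  exact h

/-- iterated residue identity for the additive formal group law.
For a bilateral series `f = ∑ a_{i,j,k} x0^i x1^j x2^k`, the coefficient of
`x1^p x2^q` in `i_{x1,x2} f(x1-x2,x1,x2)` is
`∑_{j,k} C(i, q-k)·(-1)^{q-k}·a_{i,j,k}` with `i = p+q-j-k` (from
`i_{x1,x2}(x1-x2)^i = ∑_{m≥0} C(i,m)(-1)^m x1^{i-m} x2^m`), and similarly for the
other two expansions; iterated residues extract the coefficient at `(-1,-1)`. -/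
theorem additive_iterated_residues (R : Type*) [CommRing R] (f : ℤ → ℤ → ℤ → R)
    (h12 : ∀ p q : ℤ, (Function.support fun t : ℤ × ℤ =>
      ((zbinomZ (p + q - t.1 - t.2) (q - t.2) * msign (q - t.2) : ℤ) : R)
        * f (p + q - t.1 - t.2) t.1 t.2).Finite)
    (h21 : ∀ p q : ℤ, (Function.support fun t : ℤ × ℤ =>
      ((zbinomZ (p + q - t.1 - t.2) (p - t.1) * msign (q - t.2) : ℤ) : R)
        * f (p + q - t.1 - t.2) t.1 t.2).Finite)
    (h10 : ∀ p q : ℤ, (Function.support fun t : ℤ × ℤ =>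
      ((zbinomZ (p + q - t.1 - t.2) (p - t.1) * msign (p - t.1) : ℤ) : R)
        * f t.1 t.2 (p + q - t.1 - t.2)).Finite) :
    (∑ᶠ t : ℤ × ℤ, ((zbinomZ (-2 - t.1 - t.2) (-1 - t.2) * msign (-1 - t.2) : ℤ) : R)
        * f (-2 - t.1 - t.2) t.1 t.2)
    - (∑ᶠ t : ℤ × ℤ, ((zbinomZ (-2 - t.1 - t.2) (-1 - t.1) * msign (-1 - t.2) : ℤ) : R)
        * f (-2 - t.1 - t.2) t.1 t.2)
    = ∑ᶠ t : ℤ × ℤ, ((zbinomZ (-2 - t.1 - t.2) (-1 - t.1) * msign (-1 - t.1) : ℤ) : R)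
        * f t.1 t.2 (-2 - t.1 - t.2) := by
  have h1 := h12 (-1) (-1)
  have h2 := h21 (-1) (-1)
  have e1 : ∀ t : ℤ × ℤ, (-1 : ℤ) + -1 - t.1 - t.2 = -2 - t.1 - t.2 := fun t => by ring
  simp only [e1] at h1 h2
  rw [← finsum_sub_distrib h1 h2]
  conv_rhs => rw [← finsum_comp_equiv flipEquiv]
  refine finsum_congr fun t => ?_
  rw [← sub_mul, ← Int.cast_sub, key2 t.1 t.2]
  show ((zbinomZ t.2 (1 + t.1 + t.2) * msign (1 + t.1 + t.2) : ℤ) : R)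
        * f (-2 - t.1 - t.2) t.1 t.2
      = ((zbinomZ (-2 - (-2 - t.1 - t.2) - t.1) (-1 - (-2 - t.1 - t.2))
          * msign (-1 - (-2 - t.1 - t.2)) : ℤ) : R)
        * f (-2 - t.1 - t.2) t.1 (-2 - (-2 - t.1 - t.2) - t.1)
  rw [show (-2 : ℤ) - (-2 - t.1 - t.2) - t.1 = t.2 by ring,
    show (-1 : ℤ) - (-2 - t.1 - t.2) = 1 + t.1 + t.2 by ring]
end

section
/- For all integers a, b, c with a + b + c + 2 = 0, the generalized binomial coefficients satisfy (−1)^{c−1}·C(a, −1−c) − (−1)^{a+b−1}·C(a, −1−b) = (−1)^{a−1}·C(c, −1−a), where the signs (−1)^{c−1}, (−1)^{a+b−1}, (−1)^{a−1} are interpreted as ±1 according to the parity of the integer exponent. (Note a+b−1 ≡ c−1 ≡ c+1 mod 2 since a+b+c ≡ 0 mod 2.) -/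
/-!
Coefficient-wise formal calculus for vertex `F`-algebras, following
M. Upmeier, "Vertex F-Algebras and Their Associated Lie Algebra".

Series in one, two or three variables are represented by their coefficient
functions `ℤ → R`, `ℤ → ℤ → R`, …; products are given by coefficient-wise
(finite) sums, expressed via `finsum` (`∑ᶠ`).
-/

open scoped BigOperators

section Aux

lemma zbinomZ_of_neg (n m : ℤ) (hm : m < 0) : zbinomZ n m = 0 := by
  simp [zbinomZ, hm]

lemma zbinom_nonneg' (n : ℤ) (k : ℕ) (hn : 0 ≤ n) : zbinom n k = (n.toNat.choose k : ℤ) := by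
  simp [zbinom, hn]

lemma zbinomZ_eq_zero_of_lt (n m : ℤ) (hn : 0 ≤ n) (h : n < m) : zbinomZ n m = 0 := by
  have hm : ¬ m < 0 := by omega
  rw [zbinomZ, if_neg hm, zbinom_nonneg' _ _ hn,
    Nat.choose_eq_zero_of_lt (by omega : n.toNat < m.toNat), Int.natCast_zero]

lemma zbinomZ_symm (n m : ℤ) (hn : 0 ≤ n) : zbinomZ n m = zbinomZ n (n - m) := by
  rcases lt_or_ge m 0 with hm | hm
  · rw [zbinomZ_of_neg _ _ hm, zbinomZ_eq_zero_of_lt _ _ hn (by omega)]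
  rcases lt_or_ge n m with hnm | hnm
  · rw [zbinomZ_eq_zero_of_lt _ _ hn hnm, zbinomZ_of_neg _ _ (by omega)]
  · rw [zbinomZ, if_neg (by omega : ¬ m < 0), zbinomZ, if_neg (by omega : ¬ n - m < 0),
      zbinom_nonneg' _ _ hn, zbinom_nonneg' _ _ hn,
      show (n - m).toNat = n.toNat - m.toNat by omega,
      Nat.choose_symm (by omega : m.toNat ≤ n.toNat)]

lemma msign_coe (k : ℕ) : msign (k : ℤ) = (-1 : ℤ) ^ k := by
  rcases Nat.even_or_odd k with hk | hk
  · rw [msign, if_pos (by exact_mod_cast hk), hk.neg_one_pow]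
  · rw [msign, if_neg (by rw [Int.even_coe_nat]; exact (Nat.not_even_iff_odd.symm).mp hk),
      hk.neg_one_pow]

lemma msign_of_nonneg (m : ℤ) (hm : 0 ≤ m) : msign m = (-1 : ℤ) ^ m.toNat := by
  conv_lhs => rw [show m = (m.toNat : ℤ) by omega]
  exact msign_coe _

lemma zbinomZ_negUpper (n m : ℤ) (hn : n < 0) (hm : 0 ≤ m) :
    zbinomZ n m = msign m * zbinomZ (m - n - 1) m := by
  have h2 : (0:ℤ) ≤ m - n - 1 := by omega
  rw [zbinomZ, if_neg (by omega : ¬ m < 0), zbinomZ, if_neg (by omega : ¬ m < 0),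
    zbinom_nonneg' _ _ h2, zbinom, if_neg (not_le.2 hn),
    show ((m.toNat : ℤ) - n - 1).toNat = (m - n - 1).toNat by omega,
    msign_of_nonneg _ hm]

lemma msign_mul (x y : ℤ) : msign x * msign y = msign (x + y) := by
  unfold msign
  by_cases hx : Even x <;> by_cases hy : Even y <;>
    simp [hx, hy, Int.even_add, *]

lemma msign_eq (x y : ℤ) (h : Even (x - y)) : msign x = msign y := by
  have hxy := Int.even_sub.mp h
  unfold msign
  by_cases hy : Even y
  · rw [if_pos hy, if_pos (hxy.mpr hy)]
  · rw [if_neg hy, if_neg (fun hx => hy (hxy.mp hx))]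

end Aux

/-- for all integers `a + b + c + 2 = 0`,
`(-1)^{c-1} C(a,-1-c) - (-1)^{a+b-1} C(a,-1-b) = (-1)^{a-1} C(c,-1-a)`. -/
theorem binomial_residue_identity (a b c : ℤ) (h : a + b + c + 2 = 0) :
    msign (c - 1) * zbinomZ a (-1 - c) - msign (a + b - 1) * zbinomZ a (-1 - b)
      = msign (a - 1) * zbinomZ c (-1 - a) := by
  rcases le_or_gt 0 a with ha | ha <;> rcases le_or_gt 0 b with hb | hb <;>
    rcases le_or_gt 0 c with hc | hc
  · omega
  · -- a ≥ 0, b ≥ 0, c < 0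
    rw [zbinomZ_eq_zero_of_lt a (-1-c) ha (by omega), zbinomZ_of_neg a (-1-b) (by omega),
      zbinomZ_of_neg c (-1-a) (by omega)]
    ring
  · -- a ≥ 0, b < 0, c ≥ 0
    rw [zbinomZ_of_neg a (-1-c) (by omega), zbinomZ_eq_zero_of_lt a (-1-b) ha (by omega),
      zbinomZ_of_neg c (-1-a) (by omega)]
    ring
  · -- a ≥ 0, b < 0, c < 0
    rw [zbinomZ_of_neg c (-1-a) (by omega),
      zbinomZ_symm a (-1-c) ha, show a - (-1-c) = -1-b by omega,
      msign_eq (c-1) (a+b-1) ⟨c+1, by omega⟩]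
    ring
  · -- a < 0, b ≥ 0, c ≥ 0
    rw [zbinomZ_of_neg a (-1-c) (by omega), zbinomZ_of_neg a (-1-b) (by omega),
      zbinomZ_eq_zero_of_lt c (-1-a) hc (by omega)]
    ring
  · -- a < 0, b ≥ 0, c < 0
    rw [zbinomZ_of_neg a (-1-b) (by omega),
      zbinomZ_negUpper a (-1-c) ha (by omega), show -1-c-a-1 = b by omega,
      zbinomZ_negUpper c (-1-a) hc (by omega), show -1-a-c-1 = b by omega,
      zbinomZ_symm b (-1-c) hb, show b - (-1-c) = -1-a by omega,
      ← mul_assoc, ← mul_assoc, msign_mul, msign_mul,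
      msign_eq (c-1+(-1-c)) (a-1+(-1-a)) ⟨0, by ring⟩]
    ring
  · -- a < 0, b < 0, c ≥ 0
    rw [zbinomZ_of_neg a (-1-c) (by omega),
      zbinomZ_negUpper a (-1-b) ha (by omega), show -1-b-a-1 = c by omega,
      zbinomZ_symm c (-1-b) hc, show c - (-1-b) = -1-a by omega,
      ← mul_assoc, msign_mul,
      show msign (a+b-1+(-1-b)) = - msign (a-1) by
        rw [show a+b-1+(-1-b) = a-2 by ring]
        have := msign_mul (a-2) 1
        rw [show a-2+1 = a-1 by ring] at this
        rw [← this]; simp [msign]]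
    ring
  · -- a < 0, b < 0, c < 0
    rw [zbinomZ_of_neg a (-1-c) (by omega), zbinomZ_of_neg a (-1-b) (by omega),
      zbinomZ_of_neg c (-1-a) (by omega)]
    ring
end

section
/- Let F be a formal group law over a commutative ring R. The F-binomial coefficients satisfy: (i) binomF(n; i,j) = 0 whenever j < 0 or i + j < n; (ii) for n ≥ 0, binomF(n; i,0) = δ_{i,n} (Kronecker delta) and binomF(n; i,j) = binomF(n; j,i); (iii) for all m, n, r, s ∈ ℤ, binomF(m+n; r,s) = Σ_{i+k=r, j+ℓ=s} binomF(m; i,j)·binomF(n; k,ℓ), and this sum has only finitely many nonzero terms. -/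
/-!
Coefficient-wise formal calculus for vertex `F`-algebras, following
M. Upmeier, "Vertex F-Algebras and Their Associated Lie Algebra".

Series in one, two or three variables are represented by their coefficient
functions `ℤ → R`, `ℤ → ℤ → R`, …; products are given by coefficient-wise
(finite) sums, expressed via `finsum` (`∑ᶠ`).
-/

open scoped BigOperators

noncomputable section BinomFAux

open PowerSeries

/-! ### Facts about `zbinom` -/

lemma zbinom_zero_right (n : ℤ) : zbinom n 0 = 1 := by
  unfold zbinom; split <;> simp

lemma zbinom_pascal (n : ℤ) (k : ℕ) :
    zbinom (n + 1) (k + 1) = zbinom n k + zbinom n (k + 1) := by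
  unfold zbinom
  rcases le_or_gt 0 n with hn | hn
  · rw [if_pos hn, if_pos hn, if_pos (by omega)]
    have h : (n + 1).toNat = n.toNat + 1 := by omega
    rw [h, Nat.choose_succ_succ]
    push_cast; ring
  · rcases eq_or_lt_of_le (by omega : n ≤ -1) with h1 | h2
    · subst h1
      rw [if_pos (by omega), if_neg (by omega), if_neg (by omega)]
      push_cast
      have h2 : ((k:ℤ) + 1 - (-1) - 1).toNat = k + 1 := by omega
      have h3 : ((k:ℤ) - (-1) - 1).toNat = k := by omega
      rw [h2, h3, Nat.choose_self, Nat.choose_self]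
      rw [Nat.choose_eq_zero_of_lt (by omega)]
      push_cast; ring
    · rw [if_neg (by omega), if_neg (by omega), if_neg (by omega)]
      push_cast
      have h4 : ((k:ℤ) + 1 - (n+1) - 1).toNat = ((k:ℤ) - n - 1).toNat := by omega
      have h5 : ((k:ℤ) + 1 - n - 1).toNat = ((k:ℤ) - n - 1).toNat + 1 := by omega
      rw [h4, h5, Nat.choose_succ_succ]
      push_cast; ring

lemma zbinom_eq_choose (n : ℤ) (k : ℕ) : zbinom n k = Ring.choose n k := by
  induction k generalizing n with
  | zero => rw [zbinom_zero_right, Ring.choose_zero_right]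
  | succ k ih =>
    induction n using Int.induction_on with
    | zero =>
      rw [Ring.choose_zero_succ]
      unfold zbinom; norm_num
    | succ m ihm =>
      rw [Ring.choose_succ_succ, ← ih, ← ihm, zbinom_pascal]
    | pred m ihm =>
      have h := Ring.choose_succ_succ (-(m:ℤ) - 1) k
      have h2 := zbinom_pascal (-(m:ℤ) - 1) k
      rw [show -(m:ℤ) - 1 + 1 = -(m:ℤ) by ring] at h h2
      have h3 : zbinom (-(m:ℤ) - 1) (k+1) = zbinom (-(m:ℤ)) (k+1) - zbinom (-(m:ℤ)-1) k := by
        omega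
      rw [h3, ihm, ih, h]; ring

lemma zbinom_vandermonde (m n : ℤ) (k : ℕ) :
    zbinom (m + n) k = ∑ ij ∈ Finset.HasAntidiagonal.antidiagonal k, zbinom m ij.1 * zbinom n ij.2 := by
  simp only [zbinom_eq_choose]
  exact Ring.add_choose_eq k (Commute.all m n)

lemma zbinom_zero_left (k : ℕ) : zbinom 0 k = if k = 0 then 1 else 0 := by
  unfold zbinom; cases k <;> simp

lemma zbinom_one_left (k : ℕ) : zbinom 1 k = if k ≤ 1 then 1 else 0 := by
  unfold zbinom
  rw [if_pos (by omega)]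
  match k with
  | 0 => simp
  | 1 => simp
  | (j+2) => simp [Nat.choose_eq_zero_of_lt (by omega : (1:ℕ) < j+2)]

/-! ### The transfer maps `psi`, `phi` between two-variable coefficient functions
supported on `{0 ≤ j, 0 ≤ i + j}` and `R⟦w⟧⟦x⟧` (with `x = zw`). -/

section Psi

variable {R : Type*} [CommRing R]

/-- Read off the `(a, b)` coefficient (in the `z, w` indexing) of a power series in
`R⟦w⟧⟦zw⟧`. -/
def psi (U : PowerSeries (PowerSeries R)) : ℤ → ℤ → R := fun a b =>
  if 0 ≤ b ∧ 0 ≤ a + b then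
    PowerSeries.coeff (R := R) (a + b).toNat (PowerSeries.coeff (R := PowerSeries R) b.toNat U)
  else 0

lemma psi_eq_zero {U : PowerSeries (PowerSeries R)} {a b : ℤ} (h : b < 0 ∨ a + b < 0) :
    psi U a b = 0 := by
  unfold psi; rw [if_neg (by omega)]

lemma psi_eq (U : PowerSeries (PowerSeries R)) {a b : ℤ} (hb : 0 ≤ b) (hab : 0 ≤ a + b) :
    psi U a b =
      PowerSeries.coeff (R := R) (a + b).toNat (PowerSeries.coeff (R := PowerSeries R) b.toNat U) :=
  if_pos ⟨hb, hab⟩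

/-- The inverse reindexing map. -/
def phi (f : ℤ → ℤ → R) : PowerSeries (PowerSeries R) :=
  PowerSeries.mk fun v => PowerSeries.mk fun u => f ((u : ℤ) - (v : ℤ)) (v : ℤ)

lemma psi_phi {f : ℤ → ℤ → R} (hf : ∀ i j : ℤ, j < 0 ∨ i + j < 0 → f i j = 0) :
    psi (phi f) = f := by
  funext a b
  by_cases hS : 0 ≤ b ∧ 0 ≤ a + b
  · rw [psi_eq _ hS.1 hS.2]
    unfold phi
    rw [PowerSeries.coeff_mk, PowerSeries.coeff_mk]
    congr 1 <;> omega
  · rw [psi_eq_zero (by omega), hf a b (by omega)]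

lemma psi_one : (psi (1 : PowerSeries (PowerSeries R))) = oneS2 R := by
  funext a b
  unfold oneS2
  by_cases hS : 0 ≤ b ∧ 0 ≤ a + b
  · rw [psi_eq _ hS.1 hS.2, PowerSeries.coeff_one]
    split_ifs with h1 h2 h3 <;> first
    | rfl
    | omega
    | (rw [PowerSeries.coeff_one, if_pos (by omega)])
    | (rw [PowerSeries.coeff_one, if_neg (by omega)])
    | (rw [map_zero])
  · rw [psi_eq_zero (by omega), if_neg (by omega)]

lemma psi_mul (U V : PowerSeries (PowerSeries R)) :
    mulS2 (psi U) (psi V) = psi (U * V) := by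
  funext a b
  unfold mulS2
  by_cases hS : 0 ≤ b ∧ 0 ≤ a + b
  swap
  · rw [psi_eq_zero (U := U * V) (by omega)]
    refine finsum_eq_zero_of_forall_eq_zero fun p => ?_
    by_cases h1 : 0 ≤ p.2 ∧ 0 ≤ p.1 + p.2
    · rw [psi_eq_zero (U := V) (by omega), smul_zero]
    · rw [psi_eq_zero (U := U) (by omega), zero_smul]
  obtain ⟨hb, hab⟩ := hS
  have key : ∀ q : (ℕ × ℕ) × ℕ × ℕ,
      q ∈ Finset.HasAntidiagonal.antidiagonal b.toNat ×ˢ Finset.HasAntidiagonal.antidiagonal (a + b).toNat →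
      psi U ((q.2.1 : ℤ) - (q.1.1 : ℤ)) (q.1.1 : ℤ) •
        psi V (a - ((q.2.1 : ℤ) - (q.1.1 : ℤ))) (b - (q.1.1 : ℤ))
      = PowerSeries.coeff (R := R) q.2.1 (PowerSeries.coeff (R := PowerSeries R) q.1.1 U) *
        PowerSeries.coeff (R := R) q.2.2 (PowerSeries.coeff (R := PowerSeries R) q.1.2 V) := by
    rintro ⟨⟨v1, v2⟩, u1, u2⟩ hq
    simp only [Finset.mem_product, Finset.HasAntidiagonal.mem_antidiagonal] at hq
    obtain ⟨hv, hu⟩ := hq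
    dsimp only at hv hu ⊢
    rw [psi_eq _ (by positivity) (by omega), psi_eq _ (by omega) (by omega), smul_eq_mul]
    have e1 : ((u1 : ℤ) - (v1 : ℤ) + (v1 : ℤ)).toNat = u1 := by omega
    have e2 : ((v1 : ℤ)).toNat = v1 := by omega
    have e3 : (a - ((u1 : ℤ) - (v1 : ℤ)) + (b - (v1 : ℤ))).toNat = u2 := by omega
    have e4 : (b - (v1 : ℤ)).toNat = v2 := by omega
    rw [e1, e2, e3, e4]
  calc
    (∑ᶠ p : ℤ × ℤ, psi U p.1 p.2 • psi V (a - p.1) (b - p.2))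
      = ∑ p ∈ (Finset.HasAntidiagonal.antidiagonal b.toNat ×ˢ Finset.HasAntidiagonal.antidiagonal (a + b).toNat).image
          (fun q : (ℕ × ℕ) × ℕ × ℕ => (((q.2.1 : ℤ) - (q.1.1 : ℤ), (q.1.1 : ℤ)) : ℤ × ℤ)),
          psi U p.1 p.2 • psi V (a - p.1) (b - p.2) := by
        apply finsum_eq_sum_of_support_subset
        rintro ⟨p1, p2⟩ hp
        simp only [Function.mem_support] at hp
        have h1 : ¬ (p2 < 0 ∨ p1 + p2 < 0) := fun h => hp (by rw [psi_eq_zero h, zero_smul])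
        have h2 : ¬ (b - p2 < 0 ∨ (a - p1) + (b - p2) < 0) := fun h =>
          hp (by rw [psi_eq_zero (U := V) h, smul_zero])
        push_neg at h1 h2
        simp only [Finset.coe_image, Set.mem_image, Finset.mem_coe, Finset.mem_product,
          Finset.HasAntidiagonal.mem_antidiagonal]
        refine ⟨((p2.toNat, (b - p2).toNat), ((p1 + p2).toNat, (a + b - p1 - p2).toNat)),
          ⟨?_, ?_⟩, ?_⟩
        · dsimp only; omega
        · dsimp only; omega
        · dsimp only
          simp only [Prod.mk.injEq]
          constructor <;> omega
    _ = ∑ q ∈ Finset.HasAntidiagonal.antidiagonal b.toNat ×ˢ Finset.HasAntidiagonal.antidiagonal (a + b).toNat,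
          psi U ((q.2.1 : ℤ) - (q.1.1 : ℤ)) (q.1.1 : ℤ) •
            psi V (a - ((q.2.1 : ℤ) - (q.1.1 : ℤ))) (b - (q.1.1 : ℤ)) := by
        apply Finset.sum_image
        rintro ⟨⟨v1, v2⟩, u1, u2⟩ hx ⟨⟨v1', v2'⟩, u1', u2'⟩ hy hxy
        simp only [Finset.mem_coe, Finset.mem_product, Finset.HasAntidiagonal.mem_antidiagonal] at hx hy
        simp only [Prod.mk.injEq] at hxy ⊢
        refine ⟨⟨by omega, by omega⟩, by omega, by omega⟩
    _ = ∑ q ∈ Finset.HasAntidiagonal.antidiagonal b.toNat ×ˢ Finset.HasAntidiagonal.antidiagonal (a + b).toNat,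
          PowerSeries.coeff (R := R) q.2.1 (PowerSeries.coeff (R := PowerSeries R) q.1.1 U) *
            PowerSeries.coeff (R := R) q.2.2 (PowerSeries.coeff (R := PowerSeries R) q.1.2 V) :=
        Finset.sum_congr rfl key
    _ = psi (U * V) a b := by
        rw [psi_eq _ hb hab, PowerSeries.coeff_mul, map_sum, Finset.sum_product]
        refine Finset.sum_congr rfl fun q _ => ?_
        rw [PowerSeries.coeff_mul]

lemma pow2_psi (U : PowerSeries (PowerSeries R)) (k : ℕ) :
    pow2 (psi U) k = psi (U ^ k) := by
  induction k with
  | zero => rw [pow_zero]; exact psi_one.symm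
  | succ k ih =>
    show mulS2 (psi U) (pow2 (psi U) k) = _
    rw [ih, psi_mul, ← pow_succ']

lemma psi_CXpow (W : PowerSeries (PowerSeries R)) (N : ℕ) (a b : ℤ) :
    psi (PowerSeries.C (R := PowerSeries R) (PowerSeries.X ^ N) * W) a b = psi W (a - N) b := by
  by_cases hS : 0 ≤ b ∧ 0 ≤ a + b
  · obtain ⟨hb, hab⟩ := hS
    rw [psi_eq _ hb hab, PowerSeries.coeff_C_mul, PowerSeries.coeff_X_pow_mul']
    rcases le_or_gt (N : ℤ) (a + b) with h | h
    · rw [if_pos (by omega), psi_eq _ hb (by omega)]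
      congr 2
      omega
    · rw [if_neg (by omega), psi_eq_zero (Or.inr (by omega))]
  · rw [psi_eq_zero (R := R) (by omega), psi_eq_zero (by omega)]

end Psi

/-! ### Power series attached to a formal group law -/

namespace FormalGroupLaw

variable {R : Type*} [CommRing R] (𝓕 : FormalGroupLaw R)

lemma good_F : ∀ i j : ℤ, j < 0 ∨ i + j < 0 → 𝓕.F i j = 0 := by
  intro i j h
  rcases h with h | h
  · exact 𝓕.F_supp i j (Or.inr h)
  · rcases lt_or_ge j 0 with hj | hj
    · exact 𝓕.F_supp i j (Or.inr hj)
    · exact 𝓕.F_supp i j (Or.inl (by omega))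

lemma good_h0 : ∀ i j : ℤ, j < 0 ∨ i + j < 0 → hzS 𝓕.F i j = 0 := by
  intro i j h
  unfold hzS oneS2
  rcases h with h | h
  · rw [𝓕.F_supp _ _ (Or.inr h), if_neg (by omega), sub_zero]
  · rcases lt_or_ge j 0 with hj | hj
    · rw [𝓕.F_supp _ _ (Or.inr hj), if_neg (by omega), sub_zero]
    · rcases lt_or_ge (i + 1) 0 with h2 | h2
      · rw [𝓕.F_supp _ _ (Or.inl h2), if_neg (by omega), sub_zero]
      · have hi : i = -1 := by omega
        have hj0 : j = 0 := by omega
        subst hi; subst hj0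
        rw [show (-1 : ℤ) + 1 = 0 by ring, 𝓕.F_modw 0, if_neg (by omega), if_neg (by omega),
          sub_zero]

/-- `H = (F - z)/z` reindexed as an element of `R⟦w⟧⟦x⟧`. -/
def Hs : PowerSeries (PowerSeries R) := phi (hzS 𝓕.F)

lemma h0_eq : hzS 𝓕.F = psi 𝓕.Hs := (psi_phi 𝓕.good_h0).symm

lemma coeff_zero_Hs : (PowerSeries.coeff (R := PowerSeries R) 0) 𝓕.Hs = 0 := by
  unfold Hs phi
  rw [PowerSeries.coeff_mk]
  ext u
  rw [PowerSeries.coeff_mk, map_zero]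
  unfold hzS oneS2
  simp only [Nat.cast_zero, sub_zero, and_true]
  rw [𝓕.F_modw]
  split_ifs <;> first | omega | ring1

lemma X_dvd_Hs : (PowerSeries.X : PowerSeries (PowerSeries R)) ∣ 𝓕.Hs :=
  PowerSeries.X_dvd_iff.mpr
    (by rw [← PowerSeries.coeff_zero_eq_constantCoeff_apply, 𝓕.coeff_zero_Hs])

lemma coeff_Hs_pow {k v : ℕ} (h : v < k) :
    PowerSeries.coeff (R := PowerSeries R) v (𝓕.Hs ^ k) = 0 :=
  PowerSeries.X_pow_dvd_iff.mp (pow_dvd_pow_of_dvd 𝓕.X_dvd_Hs k) v h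

lemma isUnit_w : IsUnit (1 + 𝓕.Hs) := by
  rw [PowerSeries.isUnit_iff_constantCoeff, map_add, map_one,
    ← PowerSeries.coeff_zero_eq_constantCoeff_apply, 𝓕.coeff_zero_Hs, add_zero]
  exact isUnit_one

/-- The unit `1 + H`, whose integer powers give the `F`-binomial coefficients. -/
def wU : (PowerSeries (PowerSeries R))ˣ := 𝓕.isUnit_w.unit

lemma wU_val : (𝓕.wU : PowerSeries (PowerSeries R)) = 1 + 𝓕.Hs := 𝓕.isUnit_w.unit_spec

lemma constantCoeff_w_zpow (n : ℤ) :
    PowerSeries.constantCoeff (R := PowerSeries R)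
      ((𝓕.wU ^ n : (PowerSeries (PowerSeries R))ˣ) : PowerSeries (PowerSeries R)) = 1 := by
  have h1 : Units.map (PowerSeries.constantCoeff (R := PowerSeries R)).toMonoidHom 𝓕.wU = 1 := by
    apply Units.ext
    rw [Units.coe_map]
    show PowerSeries.constantCoeff (R := PowerSeries R) (𝓕.wU : PowerSeries (PowerSeries R)) = 1
    rw [wU_val, map_add, map_one, ← PowerSeries.coeff_zero_eq_constantCoeff_apply,
      𝓕.coeff_zero_Hs, add_zero]
  have h2 : Units.map (PowerSeries.constantCoeff (R := PowerSeries R)).toMonoidHom (𝓕.wU ^ n) = 1 := by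
    rw [map_zpow, h1, one_zpow]
  have h3 := congrArg Units.val h2
  rw [Units.coe_map] at h3
  exact h3

end FormalGroupLaw

section TS

variable {R : Type*} [CommRing R] (𝓕 : FormalGroupLaw R)

/-- The ring map `ℤ → R⟦w⟧⟦x⟧`. -/
def ccI : ℤ →+* PowerSeries (PowerSeries R) :=
  (PowerSeries.C (R := PowerSeries R)).comp ((PowerSeries.C (R := R)).comp (Int.castRingHom R))

/-- Truncated Newton expansion of `(1+H)^n`. -/
def tS (V : ℕ) (n : ℤ) : PowerSeries (PowerSeries R) :=
  ∑ k ∈ Finset.range V, ccI (zbinom n k) * 𝓕.Hs ^ k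

lemma tS_mul (V : ℕ) (m n : ℤ) :
    (PowerSeries.X : PowerSeries (PowerSeries R)) ^ V ∣
      tS 𝓕 V m * tS 𝓕 V n - tS 𝓕 V (m + n) := by
  classical
  set f : ℕ × ℕ → PowerSeries (PowerSeries R) :=
    fun p => ccI (zbinom m p.1 * zbinom n p.2) * 𝓕.Hs ^ (p.1 + p.2) with hf
  have expand : tS 𝓕 V m * tS 𝓕 V n = ∑ p ∈ Finset.range V ×ˢ Finset.range V, f p := by
    unfold tS
    rw [Finset.sum_mul_sum, ← Finset.sum_product']
    refine Finset.sum_congr rfl fun p _ => ?_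
    rw [hf]
    simp only
    rw [map_mul, pow_add]
    ring
  have hsplit := Finset.sum_filter_add_sum_filter_not (Finset.range V ×ˢ Finset.range V)
    (fun p => p.1 + p.2 < V) f
  have hset : (Finset.range V ×ˢ Finset.range V).filter (fun p => p.1 + p.2 < V)
      = (Finset.range V).biUnion (fun t => Finset.HasAntidiagonal.antidiagonal t) := by
    ext p
    simp only [Finset.mem_filter, Finset.mem_product, Finset.mem_range, Finset.mem_biUnion,
      Finset.HasAntidiagonal.mem_antidiagonal]
    constructor
    · rintro ⟨⟨h1, h2⟩, h3⟩; exact ⟨p.1 + p.2, h3, rfl⟩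
    · rintro ⟨t, ht, rfl⟩; omega
  have hdisj : (↑(Finset.range V) : Set ℕ).PairwiseDisjoint
      (fun t => (Finset.HasAntidiagonal.antidiagonal t : Finset (ℕ × ℕ))) := by
    intro x _ y _ hxy
    simp only [Function.onFun]
    rw [Finset.disjoint_left]
    intro p hpx hpy
    rw [Finset.HasAntidiagonal.mem_antidiagonal] at hpx hpy
    exact hxy (hpx ▸ hpy.symm ▸ rfl)
  have hfirst : ∑ p ∈ (Finset.range V ×ˢ Finset.range V).filter (fun p => p.1 + p.2 < V), f p
      = tS 𝓕 V (m + n) := by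
    rw [hset, Finset.sum_biUnion hdisj]
    refine Finset.sum_congr rfl fun t _ => ?_
    rw [show ccI (zbinom (m + n) t) * 𝓕.Hs ^ t
        = ∑ p ∈ Finset.HasAntidiagonal.antidiagonal t, ccI (zbinom m p.1 * zbinom n p.2) * 𝓕.Hs ^ t by
      rw [← Finset.sum_mul, ← map_sum, ← zbinom_vandermonde]]
    refine Finset.sum_congr rfl fun p hp => ?_
    rw [Finset.HasAntidiagonal.mem_antidiagonal] at hp
    rw [hf]
    simp only
    rw [hp]
  have hsecond : (PowerSeries.X : PowerSeries (PowerSeries R)) ^ V ∣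
      ∑ p ∈ (Finset.range V ×ˢ Finset.range V).filter (fun p => ¬ p.1 + p.2 < V), f p := by
    refine Finset.dvd_sum fun p hp => ?_
    rw [Finset.mem_filter] at hp
    have : (PowerSeries.X : PowerSeries (PowerSeries R)) ^ V ∣ 𝓕.Hs ^ (p.1 + p.2) :=
      dvd_trans (pow_dvd_pow _ (by omega)) (pow_dvd_pow_of_dvd 𝓕.X_dvd_Hs _)
    exact this.mul_left _
  have : tS 𝓕 V m * tS 𝓕 V n - tS 𝓕 V (m + n)
      = ∑ p ∈ (Finset.range V ×ˢ Finset.range V).filter (fun p => ¬ p.1 + p.2 < V), f p := by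
    rw [expand, ← hsplit, hfirst]
    ring
  rw [this]
  exact hsecond

lemma tS_zero (V : ℕ) (hV : 1 ≤ V) : tS 𝓕 V 0 = 1 := by
  unfold tS
  rw [Finset.sum_eq_single 0]
  · rw [zbinom_zero_right, map_one, pow_zero, mul_one]
  · intro k _ hk
    rw [zbinom_zero_left, if_neg hk, map_zero, zero_mul]
  · intro h; exact absurd (Finset.mem_range.mpr hV) h

lemma tS_V1 (n : ℤ) : tS 𝓕 1 n = 1 := by
  unfold tS
  rw [Finset.sum_range_one, zbinom_zero_right, map_one, pow_zero, mul_one]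

lemma tS_one (V : ℕ) (hV : 2 ≤ V) : tS 𝓕 V 1 = 1 + 𝓕.Hs := by
  unfold tS
  have hsub : ({0, 1} : Finset ℕ) ⊆ Finset.range V := by
    intro x hx
    simp only [Finset.mem_insert, Finset.mem_singleton] at hx
    rw [Finset.mem_range]
    omega
  have hvan : ∀ x ∈ Finset.range V, x ∉ ({0, 1} : Finset ℕ) →
      ccI (zbinom 1 x) * 𝓕.Hs ^ x = 0 := by
    intro x _ hx
    simp only [Finset.mem_insert, Finset.mem_singleton] at hx
    rw [zbinom_one_left, if_neg (by omega), map_zero, zero_mul]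
  rw [← Finset.sum_subset hsub hvan, Finset.sum_insert (by simp), Finset.sum_singleton,
    zbinom_one_left, zbinom_one_left, if_pos (by omega), if_pos (by omega), map_one,
    pow_zero, mul_one, pow_one, one_mul]

lemma approx_small (n : ℤ) (V : ℕ) (hV : V ≤ 1) :
    (PowerSeries.X : PowerSeries (PowerSeries R)) ^ V ∣
      ((𝓕.wU ^ n : (PowerSeries (PowerSeries R))ˣ) : PowerSeries (PowerSeries R)) - tS 𝓕 V n := by
  interval_cases V
  · rw [pow_zero]; exact one_dvd _
  · rw [pow_one, PowerSeries.X_dvd_iff, map_sub, 𝓕.constantCoeff_w_zpow, tS_V1, map_one,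
      sub_self]

lemma w_inv_approx (V : ℕ) :
    (PowerSeries.X : PowerSeries (PowerSeries R)) ^ V ∣
      ((𝓕.wU⁻¹ : (PowerSeries (PowerSeries R))ˣ) : PowerSeries (PowerSeries R)) - tS 𝓕 V (-1) := by
  rcases Nat.lt_or_ge V 2 with hV | hV
  · have := approx_small 𝓕 (-1) V (by omega)
    rwa [zpow_neg_one] at this
  · have key : (PowerSeries.X : PowerSeries (PowerSeries R)) ^ V ∣
        (𝓕.wU : PowerSeries (PowerSeries R)) * tS 𝓕 V (-1) - 1 := by
      have h := tS_mul 𝓕 V (-1) 1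
      rw [show (-1 + 1 : ℤ) = 0 by ring] at h
      rw [tS_one 𝓕 V hV, ← 𝓕.wU_val, tS_zero 𝓕 V (by omega)] at h
      rwa [mul_comm] at h
    have hw : ((𝓕.wU⁻¹ : (PowerSeries (PowerSeries R))ˣ) : PowerSeries (PowerSeries R)) *
        (𝓕.wU : PowerSeries (PowerSeries R)) = 1 := Units.inv_mul _
    have hdecomp : ((𝓕.wU⁻¹ : (PowerSeries (PowerSeries R))ˣ) : PowerSeries (PowerSeries R))
          - tS 𝓕 V (-1)
        = -(((𝓕.wU⁻¹ : (PowerSeries (PowerSeries R))ˣ) : PowerSeries (PowerSeries R))) *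
          ((𝓕.wU : PowerSeries (PowerSeries R)) * tS 𝓕 V (-1) - 1) := by
      linear_combination (tS 𝓕 V (-1)) * hw
    rw [hdecomp]
    exact key.mul_left _

lemma w_approx (n : ℤ) (V : ℕ) :
    (PowerSeries.X : PowerSeries (PowerSeries R)) ^ V ∣
      ((𝓕.wU ^ n : (PowerSeries (PowerSeries R))ˣ) : PowerSeries (PowerSeries R)) - tS 𝓕 V n := by
  rcases Nat.lt_or_ge V 2 with hV | hV
  · exact approx_small 𝓕 n V (by omega)
  induction n using Int.induction_on with
  | zero =>
    rw [zpow_zero, tS_zero 𝓕 V (by omega), Units.val_one, sub_self]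
    exact dvd_zero _
  | succ m ih =>
    have hdecomp : ((𝓕.wU ^ ((m : ℤ) + 1) : (PowerSeries (PowerSeries R))ˣ) :
          PowerSeries (PowerSeries R)) - tS 𝓕 V ((m : ℤ) + 1)
        = (((𝓕.wU ^ (m : ℤ) : (PowerSeries (PowerSeries R))ˣ) :
            PowerSeries (PowerSeries R)) - tS 𝓕 V (m : ℤ)) * tS 𝓕 V 1
          + (tS 𝓕 V (m : ℤ) * tS 𝓕 V 1 - tS 𝓕 V ((m : ℤ) + 1)) := by
      rw [zpow_add_one, Units.val_mul, tS_one 𝓕 V hV, ← 𝓕.wU_val]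
      ring
    rw [hdecomp]
    exact dvd_add (ih.mul_right _) (tS_mul 𝓕 V (m : ℤ) 1)
  | pred m ih =>
    have hdecomp : ((𝓕.wU ^ (-(m : ℤ) - 1) : (PowerSeries (PowerSeries R))ˣ) :
          PowerSeries (PowerSeries R)) - tS 𝓕 V (-(m : ℤ) - 1)
        = (((𝓕.wU ^ (-(m : ℤ)) : (PowerSeries (PowerSeries R))ˣ) :
            PowerSeries (PowerSeries R)) - tS 𝓕 V (-(m : ℤ))) *
            ((𝓕.wU⁻¹ : (PowerSeries (PowerSeries R))ˣ) : PowerSeries (PowerSeries R))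
          + tS 𝓕 V (-(m : ℤ)) *
            (((𝓕.wU⁻¹ : (PowerSeries (PowerSeries R))ˣ) : PowerSeries (PowerSeries R))
              - tS 𝓕 V (-1))
          + (tS 𝓕 V (-(m : ℤ)) * tS 𝓕 V (-1) - tS 𝓕 V (-(m : ℤ) + -1)) := by
      rw [zpow_sub_one, Units.val_mul, show -(m : ℤ) + -1 = -(m : ℤ) - 1 by ring]
      ring
    rw [hdecomp]
    exact dvd_add (dvd_add (ih.mul_right _) ((w_inv_approx 𝓕 V).mul_left _))
      (tS_mul 𝓕 V (-(m : ℤ)) (-1))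

end TS

namespace FormalGroupLaw

variable {R : Type*} [CommRing R] (𝓕 : FormalGroupLaw R)

lemma binomF_eq (n i j : ℤ) :
    𝓕.binomF n i j =
      psi ((𝓕.wU ^ n : (PowerSeries (PowerSeries R))ˣ) : PowerSeries (PowerSeries R))
        (i - n) j := by
  have hpow : ∀ k : ℕ, pow2 (hzS 𝓕.F) k = psi (𝓕.Hs ^ k) := by
    intro k; rw [𝓕.h0_eq]; exact pow2_psi _ k
  show izwPow 𝓕.F n i j = _
  unfold izwPow
  by_cases hS : 0 ≤ j ∧ 0 ≤ (i - n) + j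
  · obtain ⟨hj, hij⟩ := hS
    have hsupp : Function.support
        (fun k : ℕ => (zbinom n k : R) * pow2 (hzS 𝓕.F) k (i - n) j)
        ⊆ ↑(Finset.range (j.toNat + 1)) := by
      intro k hk
      simp only [Function.mem_support] at hk
      simp only [Finset.coe_range, Set.mem_Iio]
      by_contra h
      apply hk
      rw [hpow k, psi_eq _ hj hij, 𝓕.coeff_Hs_pow (by omega), map_zero, mul_zero]
    rw [finsum_eq_sum_of_support_subset _ hsupp, psi_eq _ hj hij]
    have hcoeff : PowerSeries.coeff (R := PowerSeries R) j.toNat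
          ((𝓕.wU ^ n : (PowerSeries (PowerSeries R))ˣ) : PowerSeries (PowerSeries R))
        = PowerSeries.coeff (R := PowerSeries R) j.toNat (tS 𝓕 (j.toNat + 1) n) := by
      have hdvd := w_approx 𝓕 n (j.toNat + 1)
      have h := PowerSeries.X_pow_dvd_iff.mp hdvd j.toNat (by omega)
      rw [map_sub, sub_eq_zero] at h
      exact h
    rw [hcoeff]
    unfold tS
    rw [map_sum, map_sum]
    refine Finset.sum_congr rfl fun k _ => ?_
    rw [hpow k, psi_eq _ hj hij]
    unfold ccI
    rw [RingHom.comp_apply, RingHom.comp_apply, PowerSeries.coeff_C_mul,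
      PowerSeries.coeff_C_mul]
    norm_num
  · rw [psi_eq_zero (by omega)]
    refine finsum_eq_zero_of_forall_eq_zero fun k => ?_
    rw [hpow k, psi_eq_zero (by omega), mul_zero]

lemma phiF_eq :
    phi 𝓕.F = PowerSeries.C (R := PowerSeries R) PowerSeries.X * (1 + 𝓕.Hs) := by
  ext v u
  simp only [Hs, phi, PowerSeries.coeff_mk, PowerSeries.coeff_C_mul, map_add,
    PowerSeries.coeff_one]
  cases u with
  | zero =>
    rw [PowerSeries.coeff_zero_eq_constantCoeff_apply, map_mul, PowerSeries.constantCoeff_X,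
      zero_mul]
    rcases Nat.eq_zero_or_pos v with rfl | hv
    · simpa using 𝓕.F_modw 0
    · exact 𝓕.F_supp _ _ (Or.inl (by omega))
  | succ u =>
    rw [PowerSeries.coeff_succ_X_mul, map_add, apply_ite (PowerSeries.coeff (R := R) u),
      PowerSeries.coeff_one, map_zero, PowerSeries.coeff_mk]
    unfold hzS oneS2
    have harg : ((u : ℤ) + 1 : ℤ) - (v : ℤ) = ((u : ℤ) - (v : ℤ)) + 1 := by ring
    push_cast
    rw [harg]
    split_ifs <;> first | omega | ring1

lemma binomF_eq_pow2 (n : ℤ) (hn : 0 ≤ n) (i j : ℤ) :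
    𝓕.binomF n i j = pow2 𝓕.F n.toNat i j := by
  have hF : pow2 𝓕.F n.toNat = psi ((phi 𝓕.F) ^ n.toNat) := by
    conv_lhs => rw [← psi_phi 𝓕.good_F]
    exact pow2_psi _ _
  have hnN : n = (n.toNat : ℤ) := by omega
  have h1 : ((𝓕.wU ^ n : (PowerSeries (PowerSeries R))ˣ) : PowerSeries (PowerSeries R))
      = (1 + 𝓕.Hs) ^ n.toNat := by
    conv_lhs => rw [hnN]
    rw [zpow_natCast, Units.val_pow_eq_pow_val, 𝓕.wU_val]
  rw [binomF_eq, h1, hF, phiF_eq, mul_pow, ← map_pow, psi_CXpow]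
  congr 1
  omega

lemma pow2_F_symm (k : ℕ) (a b : ℤ) : pow2 𝓕.F k a b = pow2 𝓕.F k b a := by
  induction k generalizing a b with
  | zero =>
    show oneS2 R a b = oneS2 R b a
    unfold oneS2
    simp [and_comm]
  | succ k ih =>
    show mulS2 𝓕.F (pow2 𝓕.F k) a b = mulS2 𝓕.F (pow2 𝓕.F k) b a
    unfold mulS2
    have hcongr : ∀ p : ℤ × ℤ, 𝓕.F p.1 p.2 • pow2 𝓕.F k (a - p.1) (b - p.2)
        = (fun q : ℤ × ℤ => 𝓕.F q.1 q.2 • pow2 𝓕.F k (b - q.1) (a - q.2))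
            ((Equiv.prodComm ℤ ℤ) p) := by
      intro p
      simp only [Equiv.prodComm_apply, Prod.fst_swap, Prod.snd_swap]
      rw [𝓕.F_comm, ih]
    exact (finsum_congr hcongr).trans (finsum_comp_equiv (Equiv.prodComm ℤ ℤ)
      (f := fun q : ℤ × ℤ => 𝓕.F q.1 q.2 • pow2 𝓕.F k (b - q.1) (a - q.2)))

end FormalGroupLaw

end BinomFAux

/-- properties of `F`-binomial coefficients:
(i) vanishing for `j < 0` or `i + j < n`; (ii) for `n ≥ 0`, `binomF(n;i,0) = δ_{i,n}`
and symmetry `binomF(n;i,j) = binomF(n;j,i)`; (iii) the addition formula for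
`binomF(m+n;r,s)`, the sum having finitely many nonzero terms. -/
theorem binomF_identities (R : Type*) [CommRing R] (𝓕 : FormalGroupLaw R) :
    (∀ n i j : ℤ, (j < 0 ∨ i + j < n) → 𝓕.binomF n i j = 0) ∧
    (∀ n i : ℤ, 0 ≤ n → 𝓕.binomF n i 0 = if i = n then 1 else 0) ∧
    (∀ n i j : ℤ, 0 ≤ n → 𝓕.binomF n i j = 𝓕.binomF n j i) ∧
    (∀ m n r s : ℤ,
      (Function.support fun p : ℤ × ℤ =>
        𝓕.binomF m p.1 p.2 * 𝓕.binomF n (r - p.1) (s - p.2)).Finite ∧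
      𝓕.binomF (m + n) r s
        = ∑ᶠ p : ℤ × ℤ, 𝓕.binomF m p.1 p.2 * 𝓕.binomF n (r - p.1) (s - p.2)) := by
  have vanish : ∀ n i j : ℤ, (j < 0 ∨ i + j < n) → 𝓕.binomF n i j = 0 := by
    intro n i j h
    rw [𝓕.binomF_eq, psi_eq_zero (by omega)]
  refine ⟨vanish, ?_, ?_, ?_⟩
  · intro n i _
    rw [𝓕.binomF_eq]
    rcases lt_or_ge i n with h | h
    · rw [psi_eq_zero (Or.inr (by omega)), if_neg (by omega)]
    · rw [psi_eq _ (by omega) (by omega),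
        show ((0:ℤ)).toNat = 0 from rfl, PowerSeries.coeff_zero_eq_constantCoeff_apply,
        𝓕.constantCoeff_w_zpow, PowerSeries.coeff_one]
      split_ifs <;> first | rfl | omega
  · intro n i j hn
    rw [𝓕.binomF_eq_pow2 n hn, 𝓕.binomF_eq_pow2 n hn, 𝓕.pow2_F_symm]
  · intro m n r s
    constructor
    · refine Set.Finite.subset
        (Finset.finite_toSet ((Finset.Icc (m - s) (r + s - n) ×ˢ Finset.Icc 0 s :
          Finset (ℤ × ℤ)))) ?_
      rintro ⟨p1, p2⟩ hp
      simp only [Function.mem_support] at hp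
      have h1 : ¬ (p2 < 0 ∨ p1 + p2 < m) := fun h => hp (by rw [vanish m p1 p2 h, zero_mul])
      have h2 : ¬ (s - p2 < 0 ∨ (r - p1) + (s - p2) < n) := fun h =>
        hp (by rw [vanish n (r - p1) (s - p2) h, mul_zero])
      push_neg at h1 h2
      simp only [Finset.coe_product, Set.mem_prod, Finset.mem_coe, Finset.mem_Icc]
      omega
    · calc 𝓕.binomF (m + n) r s
          = ∑ᶠ p : ℤ × ℤ,
              psi ((𝓕.wU ^ m : (PowerSeries (PowerSeries R))ˣ) : PowerSeries (PowerSeries R))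
                p.1 p.2 •
              psi ((𝓕.wU ^ n : (PowerSeries (PowerSeries R))ˣ) : PowerSeries (PowerSeries R))
                (r - (m + n) - p.1) (s - p.2) := by
            rw [𝓕.binomF_eq, zpow_add, Units.val_mul, ← psi_mul]
            rfl
        _ = ∑ᶠ p : ℤ × ℤ, 𝓕.binomF m p.1 p.2 * 𝓕.binomF n (r - p.1) (s - p.2) := by
            conv_lhs => rw [← finsum_comp_equiv
              (Equiv.prodCongr (Equiv.subRight (m : ℤ)) (Equiv.refl ℤ))]
            apply finsum_congr
            intro p
            simp only [Equiv.prodCongr_apply, Equiv.coe_refl, Equiv.subRight_apply,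
              Prod.map_fst, Prod.map_snd, id_eq]
            rw [𝓕.binomF_eq m, 𝓕.binomF_eq n, smul_eq_mul]
            have e1 : r - (m + n) - (p.1 - m) = r - p.1 - n := by ring
            rw [e1]
end
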